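/- arXiv:2209.08715 — 6 statements merged into one kernel-verified Lean document; each statement's English description precedes it below -/
import Mathlib

section
/- Let {V_m, ∘_i} be a pre-Lie system and define f ∘̄ g = Σ_{i=0}^{m} (−1)^{ni} f ∘_i g for f ∈ V_m, g ∈ V_n. Then for any f ∈ V_m, g ∈ V_n, h ∈ V_p one has (f ∘̄ g) ∘̄ h − f ∘̄ (g ∘̄ h) = Σ_{i,j} (−1)^{ni+pj} (f ∘_i g) ∘_j h, where the sum runs over all pairs (i,j) with 0 ≤ i ≤ m and either 0 ≤ j ≤ i−1 or n+i+1 ≤ j ≤ m+n. -/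
open Finset

/-- A pre-Lie system `{V_m, ∘_i}`: a family of graded subspaces `V m` of an ambient
`k`-vector space `W`, together with degree-indexed bilinear composition operations
`comp m n i : V_m ⊗ V_n → V_{m+n}` (`0 ≤ i ≤ m`), satisfying the pre-Lie system
identities. -/
structure PreLieSystem (k : Type*) (W : Type*) [Field k] [AddCommGroup W] [Module k W] where
  /-- the graded components -/
  V : ℕ → Submodule k W
  /-- the composition `∘ᵢ : V_m ⊗ V_n → V_{m+n}` -/
  comp : ℕ → ℕ → ℕ → W →ₗ[k] W →ₗ[k] W
  mem_comp : ∀ m n i, i ≤ m → ∀ f ∈ V m, ∀ g ∈ V n, comp m n i f g ∈ V (m + n)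
  comp_lt : ∀ m n p i j, i ≤ m → j < i → ∀ f ∈ V m, ∀ g ∈ V n, ∀ h ∈ V p,
      comp (m + n) p j (comp m n i f g) h = comp (m + p) n (i + p) (comp m p j f h) g
  comp_mid : ∀ m n p i j, i ≤ m → i ≤ j → j ≤ n + i → ∀ f ∈ V m, ∀ g ∈ V n, ∀ h ∈ V p,
      comp (m + n) p j (comp m n i f g) h = comp m (n + p) i f (comp n p (j - i) g h)

/-- `f ∘̄ g = ∑_{i=0}^{m} (-1)^{n i} f ∘ᵢ g` for `f ∈ V_m`, `g ∈ V_n`. -/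
def PreLieSystem.cbar {k W : Type*} [Field k] [AddCommGroup W] [Module k W]
    (X : PreLieSystem k W) (m n : ℕ) (f g : W) : W :=
  ∑ i ∈ Finset.range (m + 1), ((-1 : ℤ) ^ (n * i)) • X.comp m n i f g

/-- A graded pre-Lie algebra `{V_m, ∘̄}`: graded subspaces `V m` of an ambient
`k`-vector space `W` with degree-indexed bilinear operations
`cbar m n : V_m ⊗ V_n → V_{m+n}` satisfying the graded pre-Lie identity. -/
structure GradedPreLie (k : Type*) (W : Type*) [Field k] [AddCommGroup W] [Module k W] where
  /-- the graded components -/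
  V : ℕ → Submodule k W
  /-- the operation `∘̄ : V_m ⊗ V_n → V_{m+n}` -/
  cbar : ℕ → ℕ → W →ₗ[k] W →ₗ[k] W
  mem_cbar : ∀ m n, ∀ f ∈ V m, ∀ g ∈ V n, cbar m n f g ∈ V (m + n)
  ident : ∀ m n p, ∀ f ∈ V m, ∀ g ∈ V n, ∀ h ∈ V p,
      cbar (m + n) p (cbar m n f g) h - cbar m (n + p) f (cbar n p g h)
        = ((-1 : ℤ) ^ (n * p)) •
            (cbar (m + p) n (cbar m p f h) g - cbar m (p + n) f (cbar p n h g))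

/-- The graded commutator `[f, g] = f ∘̄ g - (-1)^{mn} g ∘̄ f` of a graded pre-Lie
algebra, for `f ∈ V_m`, `g ∈ V_n`. -/
def GradedPreLie.bracket {k W : Type*} [Field k] [AddCommGroup W] [Module k W]
    (X : GradedPreLie k W) (m n : ℕ) (f g : W) : W :=
  X.cbar m n f g - ((-1 : ℤ) ^ (m * n)) • X.cbar n m g f

/-- Gerstenhaber, Theorem (i).  Let `{V_m, ∘_i}` be a pre-Lie system
over a field `k` of characteristic zero and let `f ∘̄ g = ∑_{i=0}^{m} (-1)^{ni} f ∘ᵢ g`.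
Then for `f ∈ V_m`, `g ∈ V_n`, `h ∈ V_p`,
`(f ∘̄ g) ∘̄ h - f ∘̄ (g ∘̄ h) = ∑_{i,j} (-1)^{ni + pj} (f ∘ᵢ g) ∘ⱼ h`,
where the sum runs over the pairs `(i, j)` with `0 ≤ i ≤ m` and either `0 ≤ j ≤ i - 1`
or `n + i + 1 ≤ j ≤ m + n`. -/
theorem prelie_system_assoc_defect {k W : Type*} [Field k] [CharZero k]
    [AddCommGroup W] [Module k W] (X : PreLieSystem k W) (m n p : ℕ) (f g h : W)
    (hf : f ∈ X.V m) (hg : g ∈ X.V n) (hh : h ∈ X.V p) :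
    X.cbar (m + n) p (X.cbar m n f g) h - X.cbar m (n + p) f (X.cbar n p g h)
      = ∑ ij ∈ (Finset.range (m + 1) ×ˢ Finset.range (m + n + 1)).filter
          (fun ij => ij.2 < ij.1 ∨ n + ij.1 + 1 ≤ ij.2),
          ((-1 : ℤ) ^ (n * ij.1 + p * ij.2)) •
            X.comp (m + n) p ij.2 (X.comp m n ij.1 f g) h := by
  classical
  set T : ℕ → ℕ → W := fun i j =>
    ((-1 : ℤ) ^ (n * i + p * j)) • X.comp (m + n) p j (X.comp m n i f g) h with hT
  set S : ℕ → ℕ → W := fun i l =>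
    ((-1 : ℤ) ^ ((n + p) * i + p * l)) • X.comp m (n + p) i f (X.comp n p l g h) with hS
  have h1 : X.cbar (m + n) p (X.cbar m n f g) h
      = ∑ ij ∈ Finset.range (m + 1) ×ˢ Finset.range (m + n + 1), T ij.1 ij.2 := by
    rw [Finset.sum_product']
    simp only [PreLieSystem.cbar, map_sum, map_zsmul, LinearMap.sum_apply,
      LinearMap.smul_apply, Finset.smul_sum, smul_smul, ← pow_add, hT]
    rw [Finset.sum_comm]
    refine Finset.sum_congr rfl fun j _ => Finset.sum_congr rfl fun i _ => ?_
    congr 1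
    ring
  have h2 : X.cbar m (n + p) f (X.cbar n p g h)
      = ∑ ij ∈ (Finset.range (m + 1) ×ˢ Finset.range (m + n + 1)).filter
          (fun ij => ij.1 ≤ ij.2 ∧ ij.2 ≤ n + ij.1), T ij.1 ij.2 := by
    have hcb : X.cbar m (n + p) f (X.cbar n p g h)
        = ∑ il ∈ Finset.range (m + 1) ×ˢ Finset.range (n + 1), S il.1 il.2 := by
      rw [Finset.sum_product']
      simp only [PreLieSystem.cbar, map_sum, map_zsmul, Finset.smul_sum, smul_smul,
        ← pow_add, hS]
    rw [hcb]
    refine (Finset.sum_bij' (fun ij _ => (ij.1, ij.2 - ij.1))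
      (fun il _ => (il.1, il.2 + il.1)) ?_ ?_ ?_ ?_ ?_).symm
    · rintro ⟨i, j⟩ hmem
      simp only [Finset.mem_filter, Finset.mem_product, Finset.mem_range] at hmem ⊢
      omega
    · rintro ⟨i, l⟩ hmem
      simp only [Finset.mem_filter, Finset.mem_product, Finset.mem_range] at hmem ⊢
      omega
    · rintro ⟨i, j⟩ hmem
      have hm := hmem
      simp only [Finset.mem_filter, Finset.mem_product, Finset.mem_range] at hm
      dsimp only
      simp only [Prod.mk.injEq, eq_self_iff_true, true_and]
      omega
    · rintro ⟨i, l⟩ hmem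
      simp
    · rintro ⟨i, j⟩ hmem
      simp only [Finset.mem_filter, Finset.mem_product, Finset.mem_range] at hmem
      obtain ⟨⟨him, _⟩, hij, hjn⟩ := hmem
      simp only [hT, hS]
      rw [X.comp_mid m n p i j (by omega) hij hjn f hf g hg h hh]
      obtain ⟨d, rfl⟩ := Nat.exists_eq_add_of_le hij
      have hs : n * i + p * (i + d) = (n + p) * i + p * (i + d - i) := by
        rw [Nat.add_sub_cancel_left]; ring
      rw [hs]
  rw [h1, h2]
  rw [← Finset.sum_filter_add_sum_filter_not
    (Finset.range (m + 1) ×ˢ Finset.range (m + n + 1))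
    (fun ij => ij.1 ≤ ij.2 ∧ ij.2 ≤ n + ij.1) (fun ij => T ij.1 ij.2)]
  rw [add_sub_cancel_left]
  refine Finset.sum_congr ?_ fun ij _ => rfl
  apply Finset.filter_congr
  intro ij _
  simp only [not_and, not_le, eq_iff_iff]
  omega
end

section
/- Let {V_m, ∘_i} be a pre-Lie system and define f ∘̄ g = Σ_{i=0}^{m} (−1)^{ni} f ∘_i g for f ∈ V_m, g ∈ V_n. Then {V_m, ∘̄} is a graded pre-Lie algebra, i.e. for any f ∈ V_m, g ∈ V_n, h ∈ V_p: (f ∘̄ g) ∘̄ h − f ∘̄ (g ∘̄ h) = (−1)^{np}((f ∘̄ h) ∘̄ g − f ∘̄ (h ∘̄ g)). -/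
open Finset

section Aux
variable {k W : Type*} [Field k] [AddCommGroup W] [Module k W] (X : PreLieSystem k W)

private lemma negpow_two (a c : ℕ) : ((-1 : ℤ)) ^ (a + 2 * c) = (-1) ^ a := by
  rw [pow_add, pow_mul, neg_one_sq, one_pow, mul_one]

/-- Expansion of the doubly-iterated `cbar` as a double sum over a product finset. -/
lemma cbar_cbar_expand (m n p : ℕ) (f g h : W) :
    X.cbar (m + n) p (X.cbar m n f g) h =
      ∑ ij ∈ (range (m + 1)) ×ˢ (range (m + n + 1)),
        ((-1 : ℤ) ^ (n * ij.1 + p * ij.2)) •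
          X.comp (m + n) p ij.2 (X.comp m n ij.1 f g) h := by
  rw [Finset.sum_product_right]
  simp only [PreLieSystem.cbar, map_sum, map_zsmul, map_smul, LinearMap.sum_apply,
    LinearMap.smul_apply, Finset.smul_sum, smul_smul, ← pow_add]
  refine Finset.sum_congr rfl fun j _ => Finset.sum_congr rfl fun i _ => ?_
  ring_nf

lemma cbar_cbar_expand' (m n p : ℕ) (f g h : W) :
    X.cbar m (n + p) f (X.cbar n p g h) =
      ∑ il ∈ (range (m + 1)) ×ˢ (range (n + 1)),
        ((-1 : ℤ) ^ ((n + p) * il.1 + p * il.2)) •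
          X.comp m (n + p) il.1 f (X.comp n p il.2 g h) := by
  rw [Finset.sum_product]
  simp only [PreLieSystem.cbar, map_sum, map_zsmul, map_smul, Finset.smul_sum, smul_smul, ← pow_add]

/-- The middle terms give exactly `f ∘̄ (g ∘̄ h)`. -/
lemma mid_sum (m n p : ℕ) (f g h : W) (hf : f ∈ X.V m) (hg : g ∈ X.V n) (hh : h ∈ X.V p) :
    ∑ ij ∈ ((range (m + 1)) ×ˢ (range (m + n + 1))).filter
        (fun ij => ¬ ij.2 < ij.1 ∧ ij.2 ≤ n + ij.1),
      ((-1 : ℤ) ^ (n * ij.1 + p * ij.2)) • X.comp (m + n) p ij.2 (X.comp m n ij.1 f g) h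
    = X.cbar m (n + p) f (X.cbar n p g h) := by
  rw [cbar_cbar_expand']
  refine (Finset.sum_bij' (fun il _ => (il.1, il.1 + il.2)) (fun ij _ => (ij.1, ij.2 - ij.1))
    ?_ ?_ ?_ ?_ ?_).symm
  · rintro ⟨i, l⟩ ha
    dsimp only
    simp only [mem_product, mem_range] at ha
    simp only [mem_filter, mem_product, mem_range]
    omega
  · rintro ⟨i, j⟩ ha
    dsimp only
    simp only [mem_filter, mem_product, mem_range] at ha
    simp only [mem_product, mem_range]
    omega
  · rintro ⟨i, l⟩ ha; dsimp only; simp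
  · rintro ⟨i, j⟩ ha
    dsimp only
    simp only [mem_filter, mem_product, mem_range] at ha
    simp only [Prod.mk.injEq, true_and, and_true]
    omega
  · rintro ⟨i, l⟩ ha
    dsimp only
    simp only [mem_product, mem_range] at ha
    have hsign : (n + p) * i + p * l = n * i + p * (i + l) := by ring
    rw [hsign, X.comp_mid m n p i (i + l) (by omega) (by omega) (by omega) f hf g hg h hh]
    simp

/-- Key: the `j < i` terms equal `(-1)^{np}` times the `j > p + i` terms of the swapped side. -/
lemma low_sum (m n p : ℕ) (f g h : W) (hf : f ∈ X.V m) (hg : g ∈ X.V n) (hh : h ∈ X.V p) :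
    ∑ ij ∈ ((range (m + 1)) ×ˢ (range (m + n + 1))).filter (fun ij => ij.2 < ij.1),
      ((-1 : ℤ) ^ (n * ij.1 + p * ij.2)) • X.comp (m + n) p ij.2 (X.comp m n ij.1 f g) h
    = ((-1 : ℤ) ^ (n * p)) •
      ∑ ij ∈ ((range (m + 1)) ×ˢ (range (m + p + 1))).filter
          (fun ij => ¬ ij.2 < ij.1 ∧ ¬ ij.2 ≤ p + ij.1),
        ((-1 : ℤ) ^ (p * ij.1 + n * ij.2)) • X.comp (m + p) n ij.2 (X.comp m p ij.1 f h) g := by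
  rw [Finset.smul_sum]
  refine Finset.sum_bij' (fun ij _ => (ij.2, ij.1 + p)) (fun ij _ => (ij.2 - p, ij.1))
    ?_ ?_ ?_ ?_ ?_
  · rintro ⟨i, j⟩ ha
    dsimp only
    simp only [mem_filter, mem_product, mem_range] at ha
    simp only [mem_filter, mem_product, mem_range]
    omega
  · rintro ⟨i, j⟩ ha
    dsimp only
    simp only [mem_filter, mem_product, mem_range] at ha
    simp only [mem_filter, mem_product, mem_range]
    omega
  · rintro ⟨i, j⟩ ha
    dsimp only
    simp only [mem_filter, mem_product, mem_range] at ha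
    simp only [Prod.mk.injEq, true_and, and_true]
    omega
  · rintro ⟨i, j⟩ ha
    dsimp only
    simp only [mem_filter, mem_product, mem_range] at ha
    simp only [Prod.mk.injEq, true_and, and_true]
    omega
  · rintro ⟨i, j⟩ ha
    dsimp only
    simp only [mem_filter, mem_product, mem_range] at ha
    rw [X.comp_lt m n p i j (by omega) (by omega) f hf g hg h hh, smul_smul, ← pow_add]
    congr 1
    have : n * p + (p * j + n * (i + p)) = (n * i + p * j) + 2 * (n * p) := by ring
    rw [this, negpow_two]

end Aux

/-- Gerstenhaber, Theorem (ii).  Let `{V_m, ∘_i}` be a pre-Lie system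
over a field `k` of characteristic zero and let `f ∘̄ g = ∑_{i=0}^{m} (-1)^{ni} f ∘ᵢ g`.
Then `{V_m, ∘̄}` is a graded pre-Lie algebra: for `f ∈ V_m`, `g ∈ V_n`, `h ∈ V_p`,
`(f ∘̄ g) ∘̄ h - f ∘̄ (g ∘̄ h) = (-1)^{np} ((f ∘̄ h) ∘̄ g - f ∘̄ (h ∘̄ g))`. -/


theorem prelie_system_graded_preLie {k W : Type*} [Field k] [CharZero k]
    [AddCommGroup W] [Module k W] (X : PreLieSystem k W) (m n p : ℕ) (f g h : W)
    (hf : f ∈ X.V m) (hg : g ∈ X.V n) (hh : h ∈ X.V p) :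
    X.cbar (m + n) p (X.cbar m n f g) h - X.cbar m (n + p) f (X.cbar n p g h)
      = ((-1 : ℤ) ^ (n * p)) •
          (X.cbar (m + p) n (X.cbar m p f h) g - X.cbar m (p + n) f (X.cbar p n h g)) := by
  have claimA : ∀ (n' p' : ℕ) (g' h' : W), g' ∈ X.V n' → h' ∈ X.V p' →
      X.cbar (m + n') p' (X.cbar m n' f g') h' - X.cbar m (n' + p') f (X.cbar n' p' g' h')
        = (∑ ij ∈ ((range (m + 1)) ×ˢ (range (m + n' + 1))).filter (fun ij => ij.2 < ij.1),
            ((-1 : ℤ) ^ (n' * ij.1 + p' * ij.2)) •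
              X.comp (m + n') p' ij.2 (X.comp m n' ij.1 f g') h')
          + ∑ ij ∈ ((range (m + 1)) ×ˢ (range (m + n' + 1))).filter
              (fun ij => ¬ ij.2 < ij.1 ∧ ¬ ij.2 ≤ n' + ij.1),
            ((-1 : ℤ) ^ (n' * ij.1 + p' * ij.2)) •
              X.comp (m + n') p' ij.2 (X.comp m n' ij.1 f g') h' := by
    intro n' p' g' h' hg' hh'
    rw [cbar_cbar_expand, ← mid_sum X m n' p' f g' h' hf hg' hh']
    rw [← Finset.sum_filter_add_sum_filter_not ((range (m + 1)) ×ˢ (range (m + n' + 1)))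
        (fun ij => ij.2 < ij.1)]
    rw [← Finset.sum_filter_add_sum_filter_not
        (((range (m + 1)) ×ˢ (range (m + n' + 1))).filter (fun ij => ¬ ij.2 < ij.1))
        (fun ij => ij.2 ≤ n' + ij.1), Finset.filter_filter, Finset.filter_filter]
    abel
  rw [claimA n p g h hg hh, claimA p n h g hh hg, smul_add,
      low_sum X m n p f g h hf hg hh, low_sum X m p n f h g hf hh hg,
      smul_smul, ← pow_add]
  have e : n * p + p * n = 0 + 2 * (n * p) := by ring
  rw [e, negpow_two, pow_zero, one_smul]
  exact add_comm _ _
end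

section
/- Let A be an associative conformal algebra. Then the spaces U_m together with the composition maps •_i form a pre-Lie system: for f ∈ U_m, g ∈ U_n, h ∈ U_p, (f •_i g) •_j h = (f •_j h) •_{i+p} g if 0 ≤ j ≤ i−1, and (f •_i g) •_j h = f •_i (g •_{j−i} h) if i ≤ j ≤ n+i. -/
open Finset

/-!
Framework for the Hochschild cohomology of an associative conformal algebra over a
field `k` of characteristic zero.

Polynomials with coefficients in a `k`-vector space `A` are represented by their
associated polynomial functions (this is faithful since a characteristic zero field is
infinite).  A conformal `n`-cochain (a conformal sesquilinear map
`A^{⊗ n} → A[λ₁, …, λ_{n-1}]`) is represented by a function taking a family of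
λ-values `ℕ → k` and a family of arguments `ℕ → A`, only an initial segment of which
is relevant.
-/

/-- Raw carriers for conformal polylinear maps: a family of λ-parameters and a family
of arguments (only an initial segment of each is relevant). -/
abbrev CMap (k : Type*) (A : Type*) : Type _ := (ℕ → k) → (ℕ → A) → A

variable {k : Type*} [Field k]
variable {A : Type*} [AddCommGroup A] [Module k A]

/-- `F` is a polynomial function of the first `m` λ-variables. -/
def IsPolyIn (m : ℕ) (F : (ℕ → k) → A) : Prop :=
  ∃ (N : ℕ) (c : (Fin m → Fin N) → A),
    ∀ lam : ℕ → k, F lam = ∑ α : Fin m → Fin N, (∏ r : Fin m, lam r.1 ^ (α r).1) • c α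

/-- One-variable polynomial functions `k → A`. -/
def IsPolyFun (F : k → A) : Prop :=
  ∃ c : ℕ →₀ A, ∀ x : k, F x = c.sum fun j v => x ^ j • v

/-- The coefficients of a one-variable polynomial function (via choice; the
coefficients are uniquely determined since `k` is infinite). -/
noncomputable def polyCoeffs (F : k → A) : ℕ →₀ A :=
  letI := Classical.propDecidable (IsPolyFun F)
  if h : IsPolyFun F then h.choose else 0

/-- Evaluation of a polynomial function `F(λ)` at `λ = -∂`, where `∂ = D`. -/
noncomputable def evalNegD (D : A →ₗ[k] A) (F : k → A) : A :=
  (polyCoeffs F).sum fun j v => ((-1 : ℤ) ^ j) • (D ^ j) v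

/-- An associative conformal algebra structure on the `k[∂]`-module `(A, D)`, with the
λ-product in the polynomial-function representation. -/
structure AssocConfAlg (k : Type*) (A : Type*) [Field k] [AddCommGroup A] [Module k A] where
  /-- the action of `∂` -/
  D : A →ₗ[k] A
  /-- the λ-product `(a, b, λ) ↦ a_λ b` -/
  mul : A → A → k → A
  add_left : ∀ a b c lam, mul (a + b) c lam = mul a c lam + mul b c lam
  smul_left : ∀ (r : k) a c lam, mul (r • a) c lam = r • mul a c lam
  add_right : ∀ a b c lam, mul a (b + c) lam = mul a b lam + mul a c lam
  smul_right : ∀ (r : k) a c lam, mul a (r • c) lam = r • mul a c lam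
  poly : ∀ a b, IsPolyFun fun lam => mul a b lam
  D_left : ∀ a b lam, mul (D a) b lam = -(lam • mul a b lam)
  D_right : ∀ a b lam, mul a (D b) lam = D (mul a b lam) + lam • mul a b lam
  assoc : ∀ a b c lam mu, mul (mul a b lam) c (lam + mu) = mul a (mul b c mu) lam

/-- `φ ∈ U_m`: a conformal sesquilinear map with `m` λ-variables and `m + 1`
arguments; `U_{n-1}` is the space `C^n` of Hochschild `n`-cochains, `n ≥ 1`. -/
structure IsU (D : A →ₗ[k] A) (m : ℕ) (φ : CMap k A) : Prop where
  depends : ∀ lam lam' a a', (∀ r, r < m → lam r = lam' r) →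
      (∀ r, r < m + 1 → a r = a' r) → φ lam a = φ lam' a'
  map_add : ∀ lam a i, i < m + 1 → ∀ x y : A,
      φ lam (Function.update a i (x + y))
        = φ lam (Function.update a i x) + φ lam (Function.update a i y)
  map_smul : ∀ lam a i, i < m + 1 → ∀ (r : k) (x : A),
      φ lam (Function.update a i (r • x)) = r • φ lam (Function.update a i x)
  poly : ∀ a, IsPolyIn m fun lam => φ lam a
  sesq : ∀ lam a i, i < m → ∀ x : A,
      φ lam (Function.update a i (D x)) = -(lam i • φ lam (Function.update a i x))
  sesq_last : ∀ lam a (x : A),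
      φ lam (Function.update a m (D x))
        = D (φ lam (Function.update a m x))
          + (∑ j ∈ Finset.range m, lam j) • φ lam (Function.update a m x)

/-- `f •ᵢ g`: insertion of `g ∈ U_n` into `f` at position `i`. -/
def bulletAt (n i : ℕ) (f g : CMap k A) : CMap k A := fun lam a =>
  f (fun r => if r < i then lam r
      else if r = i then ∑ t ∈ Finset.range (n + 1), lam (i + t)
      else lam (r + n))
    (fun r => if r < i then a r
      else if r = i then g (fun t => lam (i + t)) (fun t => a (i + t))
      else a (r + n))

/-- `f • g = ∑_{i=0}^{m} (-1)^{n i} f •ᵢ g` for `f ∈ U_m`, `g ∈ U_n`. -/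
def bullet (m n : ℕ) (f g : CMap k A) : CMap k A := fun lam a =>
  ∑ i ∈ Finset.range (m + 1), ((-1 : ℤ) ^ (n * i)) • bulletAt n i f g lam a

/-- The graded commutator `[f, g] = f • g - (-1)^{mn} g • f` for `f ∈ U_m`, `g ∈ U_n`. -/
def cbracketU (m n : ℕ) (f g : CMap k A) : CMap k A := fun lam a =>
  bullet m n f g lam a - ((-1 : ℤ) ^ (m * n)) • bullet n m g f lam a

/-- The degree `-1` bracket `[f, g] = f • g - (-1)^{(m-1)(n-1)} g • f` on cochains,
for `f ∈ C^m = U_{m-1}`, `g ∈ C^n = U_{n-1}` (`m, n ≥ 1`). -/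
def gbracket (m n : ℕ) (f g : CMap k A) : CMap k A :=
  cbracketU (m - 1) (n - 1) f g

/-- The cup product `f ⊔ g` of `f ∈ C^m` (`m ≥ 1`) with `g ∈ C^n`. -/
def cup (mul : A → A → k → A) (m : ℕ) (f g : CMap k A) : CMap k A := fun lam a =>
  mul (f lam a) (g (fun r => lam (r + m)) (fun r => a (r + m))) (∑ j ∈ Finset.range m, lam j)

/-- The Hochschild differential `d_n : C^n → C^{n+1}` (`n ≥ 1`). -/
def hdiff (mul : A → A → k → A) (n : ℕ) (φ : CMap k A) : CMap k A := fun lam a =>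
  mul (a 0) (φ (fun r => lam (r + 1)) (fun r => a (r + 1))) (lam 0)
    + ∑ i ∈ Finset.range n, ((-1 : ℤ) ^ (i + 1)) •
        φ (fun r => if r < i then lam r else if r = i then lam i + lam (i + 1) else lam (r + 1))
          (fun r => if r < i then a r
            else if r = i then mul (a i) (a (i + 1)) (lam i)
            else a (r + 1))
    + ((-1 : ℤ) ^ (n + 1)) • mul (φ lam a) (a n) (∑ j ∈ Finset.range n, lam j)

/-- The Hochschild differential `d_0 : C^0 = A/∂A → C^1` on representatives:
`d_0(b)(a) = a_{-∂} b - b_0 a`. -/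
noncomputable def hdiff0 (D : A →ₗ[k] A) (mul : A → A → k → A) (b : A) : CMap k A :=
  fun _lam a => evalNegD D (fun x => mul (a 0) b x) - mul b (a 0) 0

/-- `f • b` for `f ∈ C^m` (`m ≥ 1`) and `b` a representative of an element of
`C^0 = A/∂A`. -/
noncomputable def bullet0 (D : A →ₗ[k] A) (m : ℕ) (f : CMap k A) (b : A) : CMap k A :=
  fun lam a =>
    (∑ i ∈ Finset.range (m - 1), ((-1 : ℤ) ^ i) •
        f (fun r => if r < i then lam r else if r = i then 0 else lam (r - 1))
          (fun r => if r < i then a r else if r = i then b else a (r - 1)))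
      + ((-1 : ℤ) ^ (m - 1)) •
          evalNegD D (fun x =>
            f (fun r => if r = m - 2 then x else lam r)
              (fun r => if r = m - 1 then b else a r))

/-- `b ⊔ g = b ∘₀ g(…)` for `b ∈ C^0`, `g ∈ C^n`. -/
def cup0L (mul : A → A → k → A) (b : A) (g : CMap k A) : CMap k A :=
  fun lam a => mul b (g lam a) 0

/-- `f ⊔ b = f(…) ∘_{-∂} b` for `f ∈ C^m`, `b ∈ C^0`. -/
noncomputable def cup0R (D : A →ₗ[k] A) (mul : A → A → k → A) (f : CMap k A) (b : A) :
    CMap k A :=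
  fun lam a => evalNegD D (fun x => mul (f lam a) b x)

/-- `b ⊔ b' = b ∘_{-∂} b'` for `b, b' ∈ C^0`. -/
noncomputable def cup00 (D : A →ₗ[k] A) (mul : A → A → k → A) (b b' : A) : A :=
  evalNegD D (fun x => mul b b' x)

/-- Hochschild coboundaries in `C^n`. -/
def IsCoboundary (D : A →ₗ[k] A) (mul : A → A → k → A) : ℕ → CMap k A → Prop
  | 0, _ => False
  | 1, φ => ∃ b : A, φ = hdiff0 D mul b
  | (m + 2), φ => ∃ ψ : CMap k A, IsU D m ψ ∧ φ = hdiff mul (m + 1) ψ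

/-- The λ-multiplication of `A`, viewed as a `2`-cochain `ρ ∈ C²(A, A) = U₁`. -/
def rhoOf (S : AssocConfAlg k A) : CMap k A := fun lam a => S.mul (a 0) (a 1) (lam 0)


section Aux

variable {k : Type*} [Field k] {A : Type*} [AddCommGroup A] [Module k A]

/-- Finsupp reformulation of `IsPolyIn`. -/
def IsPolyIn' (M : ℕ) (F : (ℕ → k) → A) : Prop :=
  ∃ Q : (Fin M → ℕ) →₀ A, ∀ lam : ℕ → k,
    F lam = Q.sum fun e v => (∏ r : Fin M, lam r.1 ^ e r) • v

theorem isPolyIn_iff' {M : ℕ} {F : (ℕ → k) → A} : IsPolyIn M F ↔ IsPolyIn' M F := by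
  classical
  constructor
  · rintro ⟨N, c, hc⟩
    refine ⟨∑ α : Fin M → Fin N, Finsupp.single (fun r => (α r : ℕ)) (c α), fun lam => ?_⟩
    rw [hc]
    have h1 : (∑ α : Fin M → Fin N, Finsupp.single (fun r => ((α r : ℕ))) (c α)).sum
          (fun e v => (∏ r : Fin M, lam r.1 ^ e r) • v)
        = ∑ α : Fin M → Fin N, (Finsupp.single (fun r => ((α r : ℕ))) (c α)).sum
          (fun e v => (∏ r : Fin M, lam r.1 ^ e r) • v) :=
      (Finsupp.sum_finset_sum_index (fun a => smul_zero _)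
        (fun a b₁ b₂ => smul_add _ _ _)).symm
    rw [h1]
    refine Finset.sum_congr rfl fun α _ => Eq.symm ?_
    exact Finsupp.sum_single_index (a := fun r => ((α r : ℕ))) (b := c α)
      (h := fun e v => (∏ r : Fin M, lam r.1 ^ e r) • v) (smul_zero _)
  · rintro ⟨Q, hQ⟩
    set N := (Q.support.sup fun e => Finset.univ.sup e) + 1 with hN
    refine ⟨N, fun α => Q (fun r => (α r : ℕ)), fun lam => ?_⟩
    rw [hQ, Finsupp.sum]
    have hinj : ∀ x ∈ (Finset.univ : Finset (Fin M → Fin N)), ∀ y ∈ Finset.univ,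
        (fun r => ((x r : ℕ))) = (fun r => ((y r : ℕ))) → x = y := by
      intro x _ y _ hxy; funext r; exact Fin.val_injective (congrFun hxy r)
    calc ∑ e ∈ Q.support, (∏ r : Fin M, lam r.1 ^ e r) • Q e
        = ∑ e ∈ Finset.univ.image (fun (α : Fin M → Fin N) => fun r => (α r : ℕ)),
            (∏ r : Fin M, lam r.1 ^ e r) • Q e := by
          refine Finset.sum_subset ?_ ?_
          · intro e he
            refine Finset.mem_image.mpr ⟨fun r => ⟨e r, ?_⟩, Finset.mem_univ _, rfl⟩
            have h1 : e r ≤ Finset.univ.sup e := Finset.le_sup (Finset.mem_univ r)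
            have h2 : Finset.univ.sup e ≤ Q.support.sup fun e => Finset.univ.sup e :=
              Finset.le_sup he
            omega
          · intro e _ he
            rw [Finsupp.notMem_support_iff.mp he, smul_zero]
      _ = ∑ α : Fin M → Fin N, (∏ r : Fin M, lam r.1 ^ (α r : ℕ)) • Q (fun r => (α r : ℕ)) :=
          Finset.sum_image hinj

theorem IsPolyIn'.congr {M : ℕ} {F G : (ℕ → k) → A} (h : ∀ lam, F lam = G lam)
    (hG : IsPolyIn' M G) : IsPolyIn' M F := by
  obtain ⟨Q, hQ⟩ := hG; exact ⟨Q, fun lam => (h lam).trans (hQ lam)⟩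

theorem IsPolyIn'.const {M : ℕ} (v : A) : IsPolyIn' M (fun _ : ℕ → k => v) := by
  classical
  refine ⟨Finsupp.single (0 : Fin M → ℕ) v, fun lam => ?_⟩
  have h1 : (Finsupp.single (0 : Fin M → ℕ) v).sum
        (fun e w => (∏ r : Fin M, lam r.1 ^ e r) • w)
      = (∏ r : Fin M, lam r.1 ^ (0 : Fin M → ℕ) r) • v :=
    Finsupp.sum_single_index (a := (0 : Fin M → ℕ)) (b := v)
      (h := fun e w => (∏ r : Fin M, lam r.1 ^ e r) • w) (smul_zero _)
  rw [h1]
  simp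

theorem IsPolyIn'.add {M : ℕ} {F G : (ℕ → k) → A} (hF : IsPolyIn' M F) (hG : IsPolyIn' M G) :
    IsPolyIn' M (fun lam => F lam + G lam) := by
  obtain ⟨Q, hQ⟩ := hF; obtain ⟨R, hR⟩ := hG
  refine ⟨Q + R, fun lam => ?_⟩
  have h1 : (Q + R).sum (fun e v => (∏ r : Fin M, lam r.1 ^ e r) • v)
      = Q.sum (fun e v => (∏ r : Fin M, lam r.1 ^ e r) • v)
        + R.sum (fun e v => (∏ r : Fin M, lam r.1 ^ e r) • v) :=
    Finsupp.sum_add_index' (fun a => smul_zero _) (fun a b₁ b₂ => smul_add _ _ _)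
  rw [h1]
  show F lam + G lam = _
  rw [hQ, hR]

theorem IsPolyIn'.smul {M : ℕ} {F : (ℕ → k) → A} (r : k) (hF : IsPolyIn' M F) :
    IsPolyIn' M (fun lam => r • F lam) := by
  obtain ⟨Q, hQ⟩ := hF
  refine ⟨Q.mapRange (fun v : A => r • v) (smul_zero r), fun lam => ?_⟩
  have h1 : (Q.mapRange (fun v : A => r • v) (smul_zero r)).sum
        (fun e v => (∏ r : Fin M, lam r.1 ^ e r) • v)
      = Q.sum (fun e v => (∏ s : Fin M, lam s.1 ^ e s) • (r • v)) :=
    Finsupp.sum_mapRange_index (fun a => smul_zero _)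
  rw [h1]
  show r • F lam = _
  rw [hQ, Finsupp.smul_sum]
  exact Finsupp.sum_congr fun e _ => smul_comm _ _ _

theorem IsPolyIn'.mulX {M j : ℕ} (hj : j < M) {F : (ℕ → k) → A} (hF : IsPolyIn' M F) :
    IsPolyIn' M (fun lam => lam j • F lam) := by
  classical
  obtain ⟨Q, hQ⟩ := hF
  let δ : Fin M → ℕ := Pi.single (⟨j, hj⟩ : Fin M) 1
  refine ⟨Q.mapDomain (fun e => e + δ), fun lam => ?_⟩
  have h1 : (Q.mapDomain (fun e => e + δ)).sum
        (fun e v => (∏ r : Fin M, lam r.1 ^ e r) • v)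
      = Q.sum (fun (e : Fin M → ℕ) (v : A) =>
          (∏ r : Fin M, lam r.1 ^ (e + δ) r) • v) :=
    Finsupp.sum_mapDomain_index (fun a => smul_zero _) (fun a b₁ b₂ => smul_add _ _ _)
  rw [h1]
  show lam j • F lam = _
  rw [hQ, Finsupp.smul_sum]
  refine Finsupp.sum_congr fun e _ => ?_
  refine Eq.symm ?_
  have hprod : (∏ r : Fin M, lam r.1 ^ (e + δ) r)
      = lam j * ∏ r : Fin M, lam r.1 ^ e r := by
    have h2 : ∀ r : Fin M, lam r.1 ^ (e + δ) r
        = lam r.1 ^ δ r * lam r.1 ^ e r := by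
      intro r; rw [Pi.add_apply, pow_add, mul_comm]
    rw [Finset.prod_congr rfl (fun r _ => h2 r), Finset.prod_mul_distrib]
    congr 1
    rw [Finset.prod_eq_single (⟨j, hj⟩ : Fin M)]
    · simp [δ]
    · intro b _ hb
      show lam b.1 ^ δ b = 1
      rw [show δ b = 0 from Pi.single_eq_of_ne hb 1, pow_zero]
    · simp
  rw [hprod, mul_smul]

theorem IsPolyIn'.finsum {M : ℕ} {ι : Type*} (s : Finset ι) (F : ι → (ℕ → k) → A)
    (h : ∀ x ∈ s, IsPolyIn' M (F x)) :
    IsPolyIn' M (fun lam => ∑ x ∈ s, F x lam) := by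
  classical
  induction s using Finset.induction_on with
  | empty =>
    exact IsPolyIn'.congr (G := fun _ : ℕ → k => (0 : A)) (fun lam => by simp) (IsPolyIn'.const (0 : A))
  | @insert a s hx ih =>
    refine IsPolyIn'.congr (fun lam => Finset.sum_insert hx) ?_
    exact (h a (Finset.mem_insert_self a s)).add
      (ih fun x hxs => h x (Finset.mem_insert_of_mem hxs))

theorem IsPolyIn'.eval_smul {M : ℕ} (P : MvPolynomial (Fin M) k) {F : (ℕ → k) → A}
    (hF : IsPolyIn' M F) :
    IsPolyIn' M (fun lam => (MvPolynomial.eval (fun r : Fin M => lam r.1) P) • F lam) := by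
  induction P using MvPolynomial.induction_on with
  | C a => exact IsPolyIn'.congr (by simp) (hF.smul a)
  | add p q hp hq =>
    refine IsPolyIn'.congr (fun lam => ?_) (hp.add hq)
    rw [map_add, add_smul]
  | mul_X p j hp =>
    refine IsPolyIn'.congr (fun lam => ?_) (hp.mulX j.2)
    rw [map_mul, MvPolynomial.eval_X, mul_comm, mul_smul]

theorem IsPolyIn'.eval_smul_const {M : ℕ} (P : MvPolynomial (Fin M) k) (v : A) :
    IsPolyIn' M (fun lam => (MvPolynomial.eval (fun r : Fin M => lam r.1) P) • v) :=
  IsPolyIn'.eval_smul P (IsPolyIn'.const v)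


/-- The λ-reindexing used in `bulletAt`. -/
def lamComp (n i : ℕ) (lam : ℕ → k) : ℕ → k := fun r =>
  if r < i then lam r
  else if r = i then ∑ t ∈ Finset.range (n + 1), lam (i + t)
  else lam (r + n)

/-- The argument reindexing used in `bulletAt`. -/
def argComp (n i : ℕ) (g : CMap k A) (lam : ℕ → k) (a : ℕ → A) : ℕ → A := fun r =>
  if r < i then a r
  else if r = i then g (fun t => lam (i + t)) (fun t => a (i + t))
  else a (r + n)

theorem bulletAt_eq (n i : ℕ) (f g : CMap k A) (lam : ℕ → k) (a : ℕ → A) :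
    bulletAt n i f g lam a = f (lamComp n i lam) (argComp n i g lam a) := rfl

theorem argComp_update_lt {n i i0 : ℕ} (g : CMap k A) (lam : ℕ → k) (a : ℕ → A) (v : A)
    (h0 : i0 < i) :
    argComp n i g lam (Function.update a i0 v) = Function.update (argComp n i g lam a) i0 v := by
  funext r
  simp only [argComp, Function.update_apply]
  split_ifs <;> first
    | rfl
    | omega
    | (congr 1; funext t; rw [if_neg (by omega)])

theorem argComp_update_mid {n i j : ℕ} (g : CMap k A) (lam : ℕ → k) (a : ℕ → A) (v : A)
    (hj : j ≤ n) :
    argComp n i g lam (Function.update a (i + j) v)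
      = Function.update (argComp n i g lam a) i
          (g (fun t => lam (i + t)) (Function.update (fun t => a (i + t)) j v)) := by
  funext r
  simp only [argComp, Function.update_apply]
  split_ifs <;> first
    | rfl
    | omega
    | (congr 1; funext t; rw [Function.update_apply];
       split_ifs <;> first | rfl | omega)

theorem argComp_update_gt {D : A →ₗ[k] A} {n i i0 : ℕ} {g : CMap k A} (hg : IsU D n g)
    (lam : ℕ → k) (a : ℕ → A) (v : A) (h0 : i + n < i0) :
    argComp n i g lam (Function.update a i0 v)
      = Function.update (argComp n i g lam a) (i0 - n) v := by
  funext r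
  simp only [argComp, Function.update_apply]
  split_ifs <;> first
    | rfl
    | omega
    | (refine hg.depends _ _ _ _ (fun t _ => rfl) ?_; intro t ht;
       rw [if_neg (by omega)])

theorem lamComp_sum {i m n : ℕ} (hi : i < m) (lam : ℕ → k) :
    ∑ j ∈ Finset.range m, lamComp n i lam j = ∑ j ∈ Finset.range (m + n), lam j := by
  simp only [Finset.range_eq_Ico]
  rw [← Finset.sum_Ico_consecutive _ (Nat.zero_le i) (by omega : i ≤ m)]
  rw [← Finset.sum_Ico_consecutive _ (by omega : i ≤ i + 1) (by omega : i + 1 ≤ m)]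
  rw [← Finset.sum_Ico_consecutive _ (Nat.zero_le i) (by omega : i ≤ m + n)]
  rw [← Finset.sum_Ico_consecutive _ (by omega : i ≤ i + n + 1) (by omega : i + n + 1 ≤ m + n)]
  rw [← add_assoc, ← add_assoc]
  congr 1
  · congr 1
    · refine Finset.sum_congr rfl fun j hj => ?_
      simp only [lamComp]
      rw [if_pos (Finset.mem_Ico.mp hj).2]
    · have h1 : Finset.Ico i (i + 1) = {i} := by
        rw [Nat.Ico_succ_singleton]
      rw [h1, Finset.sum_singleton]
      simp only [lamComp, lt_irrefl, if_neg (lt_irrefl i), if_pos rfl, if_true]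
      rw [Finset.sum_Ico_eq_sum_range]
      refine Finset.sum_congr (by congr 1; omega) fun t _ => rfl
  · rw [Finset.sum_Ico_eq_sum_range, Finset.sum_Ico_eq_sum_range]
    have h2 : m - (i + 1) = m + n - (i + n + 1) := by omega
    rw [← h2]
    refine Finset.sum_congr rfl fun t _ => ?_
    simp only [lamComp]
    rw [if_neg (by omega), if_neg (by omega)]
    exact congrArg lam (by omega)

theorem IsU.map_zero {D : A →ₗ[k] A} {m : ℕ} {f : CMap k A} (hf : IsU D m f)
    (lam : ℕ → k) (a : ℕ → A) {i : ℕ} (hi : i < m + 1) :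
    f lam (Function.update a i 0) = 0 := by
  have h0 := hf.map_smul lam a i hi 0 0
  rw [zero_smul, zero_smul] at h0
  exact h0

theorem IsU.map_sum_smul {D : A →ₗ[k] A} {m : ℕ} {f : CMap k A} (hf : IsU D m f)
    {ι : Type*} (s : Finset ι) (c : ι → k) (v : ι → A) (lam : ℕ → k) (a : ℕ → A)
    {i : ℕ} (hi : i < m + 1) :
    f lam (Function.update a i (∑ x ∈ s, c x • v x))
      = ∑ x ∈ s, c x • f lam (Function.update a i (v x)) := by
  classical
  induction s using Finset.induction_on with
  | empty =>
    simp only [Finset.sum_empty]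
    exact hf.map_zero lam a hi
  | @insert x s hx ih =>
    rw [Finset.sum_insert hx, Finset.sum_insert hx, hf.map_add lam a i hi,
      hf.map_smul lam a i hi, ih]


theorem bulletAt_isU {D : A →ₗ[k] A} {m n i : ℕ} {f g : CMap k A}
    (hf : IsU D m f) (hg : IsU D n g) (hi : i ≤ m) : IsU D (m + n) (bulletAt n i f g) := by
  classical
  refine ⟨?_, ?_, ?_, ?_, ?_, ?_⟩
  · -- depends
    intro lam lam' a a' hl ha
    rw [bulletAt_eq, bulletAt_eq]
    apply hf.depends
    · intro r hr
      simp only [lamComp]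
      split_ifs with h1 h2
      · exact hl r (by omega)
      · refine Finset.sum_congr rfl fun t ht => ?_
        rw [Finset.mem_range] at ht
        exact hl _ (by omega)
      · exact hl _ (by omega)
    · intro r hr
      simp only [argComp]
      split_ifs with h1 h2
      · exact ha r (by omega)
      · refine hg.depends _ _ _ _ ?_ ?_
        · intro t ht; exact hl _ (by omega)
        · intro t ht; exact ha _ (by omega)
      · exact ha _ (by omega)
  · -- map_add
    intro lam a i0 hi0 x y
    simp only [bulletAt_eq]
    by_cases h1 : i0 < i
    · rw [argComp_update_lt g lam a _ h1, argComp_update_lt g lam a _ h1,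
        argComp_update_lt g lam a _ h1]
      exact hf.map_add _ _ i0 (by omega) x y
    · by_cases h2 : i0 ≤ i + n
      · obtain ⟨j, rfl⟩ : ∃ j, i0 = i + j := ⟨i0 - i, by omega⟩
        rw [argComp_update_mid g lam a _ (by omega), argComp_update_mid g lam a _ (by omega),
          argComp_update_mid g lam a _ (by omega),
          hg.map_add _ _ j (by omega) x y]
        exact hf.map_add _ _ i (by omega) _ _
      · rw [argComp_update_gt hg lam a _ (by omega), argComp_update_gt hg lam a _ (by omega),
          argComp_update_gt hg lam a _ (by omega)]
        exact hf.map_add _ _ (i0 - n) (by omega) x y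
  · -- map_smul
    intro lam a i0 hi0 c x
    simp only [bulletAt_eq]
    by_cases h1 : i0 < i
    · rw [argComp_update_lt g lam a _ h1, argComp_update_lt g lam a _ h1]
      exact hf.map_smul _ _ i0 (by omega) c x
    · by_cases h2 : i0 ≤ i + n
      · obtain ⟨j, rfl⟩ : ∃ j, i0 = i + j := ⟨i0 - i, by omega⟩
        rw [argComp_update_mid g lam a _ (by omega), argComp_update_mid g lam a _ (by omega),
          hg.map_smul _ _ j (by omega) c x]
        exact hf.map_smul _ _ i (by omega) c _
      · rw [argComp_update_gt hg lam a _ (by omega), argComp_update_gt hg lam a _ (by omega)]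
        exact hf.map_smul _ _ (i0 - n) (by omega) c x
  · -- poly
    intro a
    rw [isPolyIn_iff']
    have hgp : IsPolyIn' n (fun mu : ℕ → k => g mu (fun t => a (i + t))) :=
      isPolyIn_iff'.mp (hg.poly _)
    obtain ⟨Qg, hQg0⟩ := hgp
    have hQg : ∀ mu : ℕ → k, g mu (fun t => a (i + t))
        = Qg.sum fun e v => (∏ r : Fin n, mu r.1 ^ e r) • v := hQg0
    set B : ℕ → A := fun r => if r < i then a r else if r = i then 0 else a (r + n) with hB
    have hXB : ∀ lam : ℕ → k, argComp n i g lam a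
        = Function.update B i (g (fun t => lam (i + t)) (fun t => a (i + t))) := by
      intro lam
      funext r
      simp only [argComp, B, Function.update_apply]
      split_ifs <;> first | rfl | omega
    have step : ∀ lam : ℕ → k, bulletAt n i f g lam a
        = ∑ e ∈ Qg.support, (∏ r : Fin n, lam (i + r.1) ^ e r) •
            f (lamComp n i lam) (Function.update B i (Qg e)) := by
      intro lam
      rw [bulletAt_eq, hXB lam, hQg (fun t => lam (i + t)), Finsupp.sum]
      exact hf.map_sum_smul _ _ _ _ _ (by omega)
    refine IsPolyIn'.congr step ?_
    refine IsPolyIn'.finsum _ _ (fun e _ => ?_)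
    have hfp : IsPolyIn' m (fun mu : ℕ → k => f mu (Function.update B i (Qg e))) :=
      isPolyIn_iff'.mp (hf.poly _)
    obtain ⟨Qf, hQf0⟩ := hfp
    have hQf : ∀ mu : ℕ → k, f mu (Function.update B i (Qg e))
        = Qf.sum fun d v => (∏ r : Fin m, mu r.1 ^ d r) • v := hQf0
    -- polynomials representing the λ-substitution
    have hPL : ∀ r : Fin m, ∃ P : MvPolynomial (Fin (m + n)) k,
        ∀ lam : ℕ → k, MvPolynomial.eval (fun s : Fin (m + n) => lam s.1) P
          = lamComp n i lam r.1 := by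
      intro r
      by_cases h1 : r.1 < i
      · refine ⟨MvPolynomial.X ⟨r.1, by omega⟩, fun lam => ?_⟩
        rw [MvPolynomial.eval_X]
        simp only [lamComp]
        rw [if_pos h1]
      · by_cases h2 : r.1 = i
        · have him : i < m := by omega
          refine ⟨∑ t : Fin (n + 1), MvPolynomial.X ⟨i + t.1, by omega⟩, fun lam => ?_⟩
          rw [map_sum]
          simp only [MvPolynomial.eval_X]
          simp only [lamComp]
          rw [if_neg (by omega), if_pos h2, ← Fin.sum_univ_eq_sum_range (fun t => lam (i + t))]
        · refine ⟨MvPolynomial.X ⟨r.1 + n, by omega⟩, fun lam => ?_⟩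
          rw [MvPolynomial.eval_X]
          simp only [lamComp]
          rw [if_neg h1, if_neg h2]
    choose PL hPLe using hPL
    have hPc : ∃ P : MvPolynomial (Fin (m + n)) k,
        ∀ lam : ℕ → k, MvPolynomial.eval (fun s : Fin (m + n) => lam s.1) P
          = ∏ r : Fin n, lam (i + r.1) ^ e r := by
      refine ⟨∏ r : Fin n, MvPolynomial.X (⟨i + r.1, by omega⟩ : Fin (m + n)) ^ e r,
        fun lam => ?_⟩
      rw [MvPolynomial.eval_prod]
      refine Finset.prod_congr rfl fun r _ => ?_
      rw [map_pow, MvPolynomial.eval_X]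
    obtain ⟨Pc, hPce⟩ := hPc
    have step2 : ∀ lam : ℕ → k,
        (∏ r : Fin n, lam (i + r.1) ^ e r) • f (lamComp n i lam) (Function.update B i (Qg e))
        = ∑ d ∈ Qf.support,
            (MvPolynomial.eval (fun s : Fin (m + n) => lam s.1)
              (Pc * ∏ r : Fin m, (PL r) ^ d r)) • Qf d := by
      intro lam
      rw [hQf (lamComp n i lam), Finsupp.sum, Finset.smul_sum]
      refine Finset.sum_congr rfl fun d _ => ?_
      rw [smul_smul]
      congr 1
      rw [map_mul, hPce, MvPolynomial.eval_prod]
      congr 1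
      refine Finset.prod_congr rfl fun r _ => ?_
      rw [map_pow, hPLe]
    refine IsPolyIn'.congr step2 ?_
    exact IsPolyIn'.finsum _ _ (fun d _ => IsPolyIn'.eval_smul_const _ _)
  · -- sesq
    intro lam a i0 hi0 x
    simp only [bulletAt_eq]
    by_cases h1 : i0 < i
    · rw [argComp_update_lt g lam a _ h1, argComp_update_lt g lam a _ h1,
        hf.sesq _ _ i0 (by omega) x]
      rw [show lamComp n i lam i0 = lam i0 from if_pos h1]
    · by_cases h2 : i0 < i + n
      · obtain ⟨j, rfl⟩ : ∃ j, i0 = i + j := ⟨i0 - i, by omega⟩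
        rw [argComp_update_mid g lam a _ (by omega), argComp_update_mid g lam a _ (by omega),
          hg.sesq _ _ j (by omega) x]
        have hns : -((fun t => lam (i + t)) j • g (fun t => lam (i + t))
              (Function.update (fun t => a (i + t)) j x))
            = (-(lam (i + j))) • g (fun t => lam (i + t))
              (Function.update (fun t => a (i + t)) j x) := by
          rw [neg_smul]
        rw [hns, hf.map_smul _ _ i (by omega), neg_smul]
      · by_cases h3 : i0 = i + n
        · subst h3
          have him : i < m := by omega
          rw [argComp_update_mid g lam a _ (le_refl n), argComp_update_mid g lam a _ (le_refl n),
            hg.sesq_last _ _ x, hf.map_add _ _ i (by omega), hf.map_smul _ _ i (by omega),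
            hf.sesq _ _ i (by omega)]
          have hsum : lamComp n i lam i
              = (∑ t ∈ Finset.range n, (fun t => lam (i + t)) t) + lam (i + n) := by
            simp [lamComp, Finset.sum_range_succ]
          rw [hsum]
          set G := f (lamComp n i lam) (Function.update (argComp n i g lam a) i
            (g (fun t => lam (i + t)) (Function.update (fun t => a (i + t)) n x))) with hG
          set s := ∑ t ∈ Finset.range n, (fun t => lam (i + t)) t with hs
          module
        · rw [argComp_update_gt hg lam a _ (by omega), argComp_update_gt hg lam a _ (by omega),
            hf.sesq _ _ (i0 - n) (by omega) x]
          have : lamComp n i lam (i0 - n) = lam i0 := by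
            simp only [lamComp]
            rw [if_neg (by omega), if_neg (by omega)]
            exact congrArg lam (by omega)
          rw [this]
  · -- sesq_last
    intro lam a x
    simp only [bulletAt_eq]
    by_cases him : i = m
    · subst him
      rw [show i + n = i + n from rfl] at *
      rw [argComp_update_mid g lam a _ (le_refl n), argComp_update_mid g lam a _ (le_refl n),
        hg.sesq_last _ _ x, hf.map_add _ _ i (by omega), hf.map_smul _ _ i (by omega),
        hf.sesq_last _ _ _]
      have hsum1 : ∑ j ∈ Finset.range i, lamComp n i lam j = ∑ j ∈ Finset.range i, lam j :=
        Finset.sum_congr rfl fun j hj => if_pos (Finset.mem_range.mp hj)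
      have hsum2 : ∑ j ∈ Finset.range (i + n), lam j
          = (∑ j ∈ Finset.range i, lam j) + ∑ t ∈ Finset.range n, lam (i + t) :=
        Finset.sum_range_add lam i n
      rw [hsum1, hsum2]
      set G := f (lamComp n i lam) (Function.update (argComp n i g lam a) i
        (g (fun t => lam (i + t)) (Function.update (fun t => a (i + t)) n x))) with hGdef
      set s1 := ∑ j ∈ Finset.range i, lam j with hs1
      set s2 := ∑ t ∈ Finset.range n, lam (i + t) with hs2
      module
    · have hgt : i + n < m + n := by omega
      rw [argComp_update_gt hg lam a _ hgt, argComp_update_gt hg lam a _ hgt]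
      rw [show m + n - n = m from by omega]
      rw [hf.sesq_last _ _ x]
      rw [lamComp_sum (by omega) lam]


theorem lamComp_lt {i r : ℕ} (n : ℕ) (lam : ℕ → k) (h : r < i) :
    lamComp n i lam r = lam r := if_pos h

theorem lamComp_at (n i : ℕ) (lam : ℕ → k) :
    lamComp n i lam i = ∑ t ∈ Finset.range (n + 1), lam (i + t) := by
  simp [lamComp]

theorem lamComp_gt {i r : ℕ} (n : ℕ) (lam : ℕ → k) (h : i < r) :
    lamComp n i lam r = lam (r + n) := by
  simp only [lamComp]
  rw [if_neg (by omega), if_neg (by omega)]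

theorem argComp_val_lt {i r : ℕ} (n : ℕ) (g : CMap k A) (lam : ℕ → k) (a : ℕ → A) (h : r < i) :
    argComp n i g lam a r = a r := if_pos h

theorem argComp_val_at (n i : ℕ) (g : CMap k A) (lam : ℕ → k) (a : ℕ → A) :
    argComp n i g lam a i = g (fun t => lam (i + t)) (fun t => a (i + t)) := by
  simp [argComp]

theorem argComp_val_gt {i r : ℕ} (n : ℕ) (g : CMap k A) (lam : ℕ → k) (a : ℕ → A) (h : i < r) :
    argComp n i g lam a r = a (r + n) := by
  simp only [argComp]
  rw [if_neg (by omega), if_neg (by omega)]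

theorem bulletAt_comm {D : A →ₗ[k] A} {n p i j : ℕ} {f g h : CMap k A} (hh : IsU D p h)
    (hj : j < i) :
    bulletAt p j (bulletAt n i f g) h = bulletAt n (i + p) (bulletAt p j f h) g := by
  funext lam a
  simp only [bulletAt_eq]
  have hL : lamComp n i (lamComp p j lam) = lamComp p j (lamComp n (i + p) lam) := by
    funext r
    rcases Nat.lt_trichotomy r i with h1 | h1 | h1
    · rw [lamComp_lt n _ h1]
      rcases Nat.lt_trichotomy r j with h2 | h2 | h2
      · rw [lamComp_lt p lam h2, lamComp_lt p _ h2, lamComp_lt n lam (by omega)]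
      · subst h2
        rw [lamComp_at p r lam, lamComp_at p r _]
        refine Finset.sum_congr rfl fun t ht => ?_
        rw [Finset.mem_range] at ht
        rw [lamComp_lt n lam (by omega)]
      · rw [lamComp_gt p lam h2, lamComp_gt p _ h2, lamComp_lt n lam (by omega)]
    · subst h1
      rw [lamComp_at n r _, lamComp_gt (i := j) (r := r) p _ hj, lamComp_at n (r + p) lam]
      refine Finset.sum_congr rfl fun t ht => ?_
      rw [lamComp_gt p lam (by omega)]
      exact congrArg lam (by omega)
    · rw [lamComp_gt n _ h1, lamComp_gt p lam (by omega), lamComp_gt p _ (by omega),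
        lamComp_gt n lam (by omega)]
      exact congrArg lam (by omega)
  have hA : argComp n i g (lamComp p j lam) (argComp p j h lam a)
      = argComp p j h (lamComp n (i + p) lam) (argComp n (i + p) g lam a) := by
    funext r
    rcases Nat.lt_trichotomy r i with h1 | h1 | h1
    · rw [argComp_val_lt n g _ _ h1]
      rcases Nat.lt_trichotomy r j with h2 | h2 | h2
      · rw [argComp_val_lt p h lam a h2, argComp_val_lt p h _ _ h2,
          argComp_val_lt n g lam a (by omega)]
      · subst h2
        rw [argComp_val_at p r h lam a, argComp_val_at p r h _ _]
        refine hh.depends _ _ _ _ ?_ ?_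
        · intro t ht
          rw [lamComp_lt n lam (by omega)]
        · intro t ht
          rw [argComp_val_lt n g lam a (by omega)]
      · rw [argComp_val_gt p h lam a h2, argComp_val_gt p h _ _ h2,
          argComp_val_lt n g lam a (by omega)]
    · subst h1
      rw [argComp_val_at n r g _ _, argComp_val_gt (i := j) (r := r) p h _ _ hj,
        argComp_val_at n (r + p) g lam a]
      refine congrArg₂ g ?_ ?_
      · funext t
        rw [lamComp_gt p lam (by omega)]
        exact congrArg lam (by omega)
      · funext t
        rw [argComp_val_gt p h lam a (by omega)]
        exact congrArg a (by omega)
    · rw [argComp_val_gt n g _ _ h1, argComp_val_gt p h lam a (by omega),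
        argComp_val_gt p h _ _ (by omega), argComp_val_gt n g lam a (by omega)]
      exact congrArg a (by omega)
  rw [hL, hA]

theorem bulletAt_assoc {n p i j : ℕ} (f g h : CMap k A) (hij : i ≤ j) (hjn : j ≤ n + i) :
    bulletAt p j (bulletAt n i f g) h = bulletAt (n + p) i f (bulletAt p (j - i) g h) := by
  obtain ⟨q, rfl⟩ : ∃ q, j = i + q := ⟨j - i, by omega⟩
  have hq : q ≤ n := by omega
  rw [show i + q - i = q from by omega]
  funext lam a
  simp only [bulletAt_eq]
  have hterm : ∀ t, lamComp p (i + q) lam (i + t) = lamComp p q (fun s => lam (i + s)) t := by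
    intro t
    rcases Nat.lt_trichotomy t q with h2 | h2 | h2
    · rw [lamComp_lt p lam (by omega), lamComp_lt p _ h2]
    · subst h2
      rw [lamComp_at p (i + t) lam, lamComp_at p t _]
      refine Finset.sum_congr rfl fun s _ => congrArg lam (by omega)
    · rw [lamComp_gt p lam (by omega), lamComp_gt p _ h2]
      exact congrArg lam (by omega)
  have hL : lamComp n i (lamComp p (i + q) lam) = lamComp (n + p) i lam := by
    funext r
    rcases Nat.lt_trichotomy r i with h1 | h1 | h1
    · rw [lamComp_lt n _ h1, lamComp_lt p lam (by omega), lamComp_lt (n + p) lam h1]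
    · subst h1
      rw [lamComp_at n r _, lamComp_at (n + p) r lam]
      rw [Finset.sum_congr rfl fun t _ => hterm t, lamComp_sum (by omega : q < n + 1)]
      rw [show n + 1 + p = n + p + 1 from by omega]
    · rw [lamComp_gt n _ h1, lamComp_gt p lam (by omega), lamComp_gt (n + p) lam h1]
      exact congrArg lam (by omega)
  have hA : argComp n i g (lamComp p (i + q) lam) (argComp p (i + q) h lam a)
      = argComp (n + p) i (bulletAt p q g h) lam a := by
    funext r
    rcases Nat.lt_trichotomy r i with h1 | h1 | h1
    · rw [argComp_val_lt n g _ _ h1, argComp_val_lt p h lam a (by omega),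
        argComp_val_lt (n + p) _ lam a h1]
    · subst h1
      rw [argComp_val_at n r g _ _, argComp_val_at (n + p) r (bulletAt p q g h) lam a,
        bulletAt_eq]
      refine congrArg₂ g ?_ ?_
      · funext t
        exact hterm t
      · funext t
        rcases Nat.lt_trichotomy t q with h2 | h2 | h2
        · rw [argComp_val_lt p h lam a (by omega), argComp_val_lt p h _ _ h2]
        · subst h2
          rw [argComp_val_at p (r + t) h lam a, argComp_val_at p t h _ _]
          refine congrArg₂ h ?_ ?_
          · funext s
            exact congrArg lam (by omega)
          · funext s
            exact congrArg a (by omega)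
        · rw [argComp_val_gt p h lam a (by omega), argComp_val_gt p h _ _ h2]
          exact congrArg a (by omega)
    · rw [argComp_val_gt n g _ _ h1, argComp_val_gt p h lam a (by omega),
        argComp_val_gt (n + p) _ lam a h1]
      exact congrArg a (by omega)
  rw [hL, hA]

end Aux


/-- Let `A` be an associative conformal algebra.  Then the spaces
`U_m` of conformal sesquilinear maps, together with the composition maps `•ᵢ`, form a
pre-Lie system: `•ᵢ` maps `U_m × U_n` to `U_{m+n}` for `0 ≤ i ≤ m`, and for
`f ∈ U_m`, `g ∈ U_n`, `h ∈ U_p` one has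
`(f •ᵢ g) •ⱼ h = (f •ⱼ h) •_{i+p} g` if `0 ≤ j ≤ i - 1`, and
`(f •ᵢ g) •ⱼ h = f •ᵢ (g •_{j-i} h)` if `i ≤ j ≤ n + i`. -/
theorem conformal_bullet_preLie_system {k A : Type*} [Field k] [CharZero k]
    [AddCommGroup A] [Module k A] (S : AssocConfAlg k A) (m n p : ℕ) (f g h : CMap k A)
    (hf : IsU S.D m f) (hg : IsU S.D n g) (hh : IsU S.D p h) :
    (∀ i : ℕ, i ≤ m → IsU S.D (m + n) (bulletAt n i f g)) ∧
    (∀ i j : ℕ, i ≤ m → j < i →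
      bulletAt p j (bulletAt n i f g) h = bulletAt n (i + p) (bulletAt p j f h) g) ∧
    (∀ i j : ℕ, i ≤ m → i ≤ j → j ≤ n + i →
      bulletAt p j (bulletAt n i f g) h = bulletAt (n + p) i f (bulletAt p (j - i) g h)) :=
  ⟨fun i hi => bulletAt_isU hf hg hi, fun _ _ _ hj => bulletAt_comm hh hj,
    fun _ _ _ hij hjn => bulletAt_assoc f g h hij hjn⟩
end

section
/- Let A be a k[∂]-module and let ρ ∈ U₁ be a conformal sesquilinear map A ⊗ A → A[λ]. Then the λ-product a_λ b := ρ_λ(a,b) makes A an associative conformal algebra if and only if [ρ, ρ] = 0, where [−,−] is the graded commutator of the composition f • g = Σ_{i=0}^{m} (−1)^{ni} f •_i g on ⊕_{i≥0} U_i. -/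
open Finset

variable {k : Type*} [Field k]
variable {A : Type*} [AddCommGroup A] [Module k A]

section Aux

variable {k : Type*} [Field k] {A : Type*} [AddCommGroup A] [Module k A]

lemma isPolyFun_sum {ι : Type*} (s : Finset ι) (e : ι → ℕ) (v : ι → A) :
    IsPolyFun (fun x : k => ∑ i ∈ s, x ^ e i • v i) := by
  classical
  induction s using Finset.induction_on with
  | empty => exact ⟨0, by simp⟩
  | @insert i s hns ih =>
    obtain ⟨c, hc⟩ := ih
    refine ⟨Finsupp.single (e i) (v i) + c, fun x => ?_⟩
    show ∑ j ∈ insert i s, x ^ e j • v j = _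
    rw [Finset.sum_insert hns,
      Finsupp.sum_add_index' (fun j => by simp) (fun j b₁ b₂ => smul_add _ _ _),
      Finsupp.sum_single_index (by simp)]
    congr 1
    exact hc x

/-- The λ-product associated with a raw 2-cochain. -/
def mulOf (ρ : CMap k A) : A → A → k → A := fun a b l =>
  ρ (fun _ => l) (fun r => if r = 0 then a else b)

variable {D : A →ₗ[k] A} {ρ : CMap k A}

lemma mulOf_eq (hρ : IsU D 1 ρ) (lam : ℕ → k) (a : ℕ → A) :
    ρ lam a = mulOf ρ (a 0) (a 1) (lam 0) := by
  show ρ lam a = ρ (fun _ => lam 0) (fun r => if r = 0 then a 0 else a 1)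
  apply hρ.depends
  · intro r hr; interval_cases r; rfl
  · intro r hr; interval_cases r <;> rfl

lemma mulOf_update0 (hρ : IsU D 1 ρ) (x c : A) (lam : k) :
    mulOf ρ x c lam = ρ (fun _ => lam) (Function.update (fun _ => c) 0 x) := by
  show ρ _ _ = ρ _ _
  congr 1
  funext r
  simp [Function.update_apply]

lemma mulOf_update1 (hρ : IsU D 1 ρ) (a x : A) (lam : k) :
    mulOf ρ a x lam = ρ (fun _ => lam) (Function.update (fun _ => a) 1 x) := by
  show ρ _ _ = ρ _ _
  apply hρ.depends
  · intro r hr; rfl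
  · intro r hr; interval_cases r <;> simp [Function.update_apply]

lemma bulletAt_zero_eq (hρ : IsU D 1 ρ) (lam : ℕ → k) (a : ℕ → A) :
    bulletAt 1 0 ρ ρ lam a
      = mulOf ρ (mulOf ρ (a 0) (a 1) (lam 0)) (a 2) (lam 0 + lam 1) := by
  show ρ _ _ = _
  refine (mulOf_eq hρ _ _).trans ?_
  simp only [Finset.sum_range_succ, Finset.sum_range_one]
  norm_num
  rw [mulOf_eq hρ lam a]

lemma bulletAt_one_eq (hρ : IsU D 1 ρ) (lam : ℕ → k) (a : ℕ → A) :
    bulletAt 1 1 ρ ρ lam a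
      = mulOf ρ (a 0) (mulOf ρ (a 1) (a 2) (lam 1)) (lam 0) := by
  show ρ _ _ = _
  refine (mulOf_eq hρ _ _).trans ?_
  norm_num
  rw [mulOf_eq hρ (fun t => lam (1 + t)) (fun t => a (1 + t))]

lemma bullet_eq (hρ : IsU D 1 ρ) (lam : ℕ → k) (a : ℕ → A) :
    bullet 1 1 ρ ρ lam a
      = mulOf ρ (mulOf ρ (a 0) (a 1) (lam 0)) (a 2) (lam 0 + lam 1)
        - mulOf ρ (a 0) (mulOf ρ (a 1) (a 2) (lam 1)) (lam 0) := by
  show (∑ i ∈ Finset.range 2, ((-1 : ℤ) ^ (1 * i)) • bulletAt 1 i ρ ρ lam a) = _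
  rw [Finset.sum_range_succ, Finset.sum_range_one, bulletAt_zero_eq hρ,
    bulletAt_one_eq hρ]
  norm_num [sub_eq_add_neg]

end Aux

/-- Maurer–Cartan characterization.  Let `(A, D)` be a `k[∂]`-module
and let `ρ ∈ U₁` be a conformal sesquilinear map `A ⊗ A → A[λ]`.  Then the λ-product
`a_λ b := ρ_λ(a, b)` makes `A` an associative conformal algebra if and only if
`[ρ, ρ] = 0`, where `[-, -]` is the graded commutator of the composition
`f • g = ∑_{i=0}^{m} (-1)^{ni} f •ᵢ g` on `⊕_{i ≥ 0} U_i`. -/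
theorem assocConfAlg_iff_maurerCartan {k A : Type*} [Field k] [CharZero k]
    [AddCommGroup A] [Module k A] (D : A →ₗ[k] A) (ρ : CMap k A) (hρ : IsU D 1 ρ) :
    (∃ S : AssocConfAlg k A, S.D = D ∧
        S.mul = fun a b lam => ρ (fun _ => lam) (fun r => if r = 0 then a else b)) ↔
      cbracketU 1 1 ρ ρ = 0 := by
  have key : cbracketU 1 1 ρ ρ = 0 ↔ ∀ (lam : ℕ → k) (a : ℕ → A),
      mulOf ρ (mulOf ρ (a 0) (a 1) (lam 0)) (a 2) (lam 0 + lam 1)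
        = mulOf ρ (a 0) (mulOf ρ (a 1) (a 2) (lam 1)) (lam 0) := by
    constructor
    · intro h lam a
      have h0 : cbracketU 1 1 ρ ρ lam a = 0 := by rw [h]; rfl
      have h1 : bullet 1 1 ρ ρ lam a + bullet 1 1 ρ ρ lam a = 0 := by
        have := h0
        rw [cbracketU] at this
        simpa [sub_eq_add_neg] using this
      have h2 : (2 : k) • bullet 1 1 ρ ρ lam a = 0 := by
        rw [two_smul]; exact h1
      have hb : bullet 1 1 ρ ρ lam a = 0 :=
        (smul_eq_zero.mp h2).resolve_left two_ne_zero
      rw [bullet_eq hρ] at hb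
      exact sub_eq_zero.mp hb
    · intro h
      funext lam a
      show bullet 1 1 ρ ρ lam a - ((-1 : ℤ) ^ (1 * 1)) • bullet 1 1 ρ ρ lam a = 0
      have hb : bullet 1 1 ρ ρ lam a = 0 := by
        rw [bullet_eq hρ, h lam a, sub_self]
      rw [hb]
      simp
  rw [key]
  constructor
  · rintro ⟨S, hD, hmul⟩ lam a
    have hm : mulOf ρ = S.mul := by rw [hmul]; rfl
    rw [hm]
    exact S.assoc (a 0) (a 1) (a 2) (lam 0) (lam 1)
  · intro h
    refine ⟨{ D := D, mul := mulOf ρ, add_left := ?_, smul_left := ?_, add_right := ?_, smul_right := ?_, poly := ?_, D_left := ?_, D_right := ?_, assoc := ?_ }, rfl, rfl⟩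
    · intro a b c lam
      rw [mulOf_update0 hρ, mulOf_update0 hρ, mulOf_update0 hρ]
      exact hρ.map_add _ _ 0 (by norm_num) a b
    · intro r a c lam
      rw [mulOf_update0 hρ, mulOf_update0 hρ]
      exact hρ.map_smul _ _ 0 (by norm_num) r a
    · intro a b c lam
      rw [mulOf_update1 hρ, mulOf_update1 hρ, mulOf_update1 hρ]
      exact hρ.map_add _ _ 1 (by norm_num) b c
    · intro r a c lam
      rw [mulOf_update1 hρ, mulOf_update1 hρ]
      exact hρ.map_smul _ _ 1 (by norm_num) r c
    · intro a b
      obtain ⟨N, c, hc⟩ := hρ.poly (fun r => if r = 0 then a else b)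
      obtain ⟨cf, hcf⟩ := isPolyFun_sum (k := k) (Finset.univ : Finset (Fin 1 → Fin N))
        (fun α => (α 0).1) (fun α => c α)
      refine ⟨cf, fun x => ?_⟩
      show ρ (fun _ => x) (fun r => if r = 0 then a else b) = _
      refine (hc (fun _ => x)).trans (Eq.trans ?_ (hcf x))
      simp
    · intro a b lam
      rw [mulOf_update0 hρ, mulOf_update0 hρ]
      exact hρ.sesq _ _ 0 (by norm_num) a
    · intro a b lam
      rw [mulOf_update1 hρ, mulOf_update1 hρ]
      have := hρ.sesq_last (fun _ => lam) (fun _ => a) b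
      rw [Finset.sum_range_one] at this
      exact this
    · intro a b c l m
      have := h (fun r => if r = 0 then l else m)
        (fun r => if r = 0 then a else if r = 1 then b else c)
      simpa using this
end

section
/- Let A be an associative conformal algebra. For any f ∈ C^m(A,A) and g ∈ C^n(A,A) with m, n ≥ 1, the Hochschild differential is a graded derivation of the degree −1 bracket: d_{m+n−1}([f, g]) = (−1)^{n+1}[d_m(f), g] + [f, d_n(g)]. -/
open Finset

variable {k : Type*} [Field k]
variable {A : Type*} [AddCommGroup A] [Module k A]

section Aux
variable {k : Type*} [Field k] {A : Type*} [AddCommGroup A] [Module k A]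

lemma sum_split3 {M : Type*} [AddCommMonoid M] (G : ℕ → M) (d q s : ℕ) (hd : d ≤ q) :
    ∑ t ∈ range (q + s + 1), G t
      = ((∑ t ∈ range d, G t) + ∑ u ∈ range (s + 1), G (d + u))
        + ∑ t ∈ Ico (d + 1) (q + 1), G (t + s) := by
  have e2 : ∑ t ∈ Ico d (d+s+1), G t = ∑ u ∈ range (s + 1), G (d + u) := by
    rw [Finset.sum_Ico_eq_sum_range]
    have h : d + s + 1 - d = s + 1 := by omega
    rw [h]
  have e3 : ∑ t ∈ Ico (d+s+1) (q+s+1), G t = ∑ t ∈ Ico (d + 1) (q + 1), G (t + s) := by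
    rw [Finset.sum_Ico_eq_sum_range, Finset.sum_Ico_eq_sum_range]
    have h : q + s + 1 - (d + s + 1) = q + 1 - (d + 1) := by omega
    rw [h]
    exact Finset.sum_congr rfl fun u _ => by congr 1; omega
  rw [Finset.range_eq_Ico,
      ← Finset.sum_Ico_consecutive G (by omega : (0:ℕ) ≤ d) (by omega : d ≤ q+s+1),
      ← Finset.sum_Ico_consecutive G (by omega : d ≤ d+s+1) (by omega : d+s+1 ≤ q+s+1),
      e2, e3, ← Finset.range_eq_Ico, add_assoc]

lemma sum_split_at {M : Type*} [AddCommMonoid M] (G : ℕ → M) (d q : ℕ) (hd : d ≤ q) :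
    ∑ t ∈ range (q + 1), G t
      = ((∑ t ∈ range d, G t) + G d) + ∑ t ∈ Ico (d + 1) (q + 1), G t := by
  have e2 : ∑ t ∈ Ico d (d+1), G t = G d := by
    rw [Finset.sum_Ico_eq_sum_range]
    have h : d + 1 - d = 1 := by omega
    rw [h]
    simp
  rw [Finset.range_eq_Ico,
      ← Finset.sum_Ico_consecutive G (by omega : (0:ℕ) ≤ d) (by omega : d ≤ q+1),
      ← Finset.sum_Ico_consecutive G (by omega : d ≤ d+1) (by omega : d+1 ≤ q+1),
      e2, ← Finset.range_eq_Ico, add_assoc]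

lemma sum_tri_swap {M : Type*} [AddCommMonoid M] (G : ℕ → ℕ → M) (a : ℕ) :
    ∑ i ∈ range (a+1), ∑ j ∈ range i, G i j
      = ∑ i ∈ range (a+1), ∑ t ∈ Ico (i+1) (a+1), G t i := by
  have h1 : ∀ i ∈ range (a+1), ∑ j ∈ range i, G i j
      = ∑ j ∈ range (a+1), if j < i then G i j else 0 := by
    intro i hi
    rw [mem_range] at hi
    rw [← Finset.sum_filter]
    apply Finset.sum_congr _ fun _ _ => rfl
    ext j; simp only [mem_range, mem_filter]; omega
  rw [Finset.sum_congr rfl h1, Finset.sum_comm]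
  apply Finset.sum_congr rfl
  intro j _
  have h2 : Ico (j+1) (a+1) = (range (a+1)).filter (fun i => j < i) := by
    ext i; simp only [mem_Ico, mem_range, mem_filter]; omega
  rw [h2, Finset.sum_filter]

/-- the λ-sequence fed to the outer map in `bulletAt`. -/
def lamIns (n i : ℕ) (lam : ℕ → k) : ℕ → k := fun r =>
  if r < i then lam r
  else if r = i then ∑ t ∈ Finset.range (n + 1), lam (i + t)
  else lam (r + n)

/-- the argument sequence fed to the outer map in `bulletAt`. -/
def argIns (n i : ℕ) (g : CMap k A) (lam : ℕ → k) (a : ℕ → A) : ℕ → A := fun r =>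
  if r < i then a r
  else if r = i then g (fun t => lam (i + t)) (fun t => a (i + t))
  else a (r + n)

lemma bulletAt_def (n i : ℕ) (f g : CMap k A) (lam : ℕ → k) (a : ℕ → A) :
    bulletAt n i f g lam a = f (lamIns n i lam) (argIns n i g lam a) := rfl

lemma lamIns_lt {r i : ℕ} (n : ℕ) (lam : ℕ → k) (h : r < i) : lamIns n i lam r = lam r :=
  if_pos h

lemma lamIns_self (n i : ℕ) (lam : ℕ → k) :
    lamIns (k := k) n i lam i = ∑ t ∈ Finset.range (n + 1), lam (i + t) := by
  simp [lamIns]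

lemma lamIns_gt {r i : ℕ} (n : ℕ) (lam : ℕ → k) (h : i < r) : lamIns n i lam r = lam (r + n) := by
  simp only [lamIns, if_neg (by omega : ¬ r < i), if_neg (by omega : ¬ r = i)]

lemma argIns_lt {r i : ℕ} (n : ℕ) (g : CMap k A) (lam : ℕ → k) (a : ℕ → A) (h : r < i) :
    argIns n i g lam a r = a r := if_pos h

lemma argIns_self (n i : ℕ) (g : CMap k A) (lam : ℕ → k) (a : ℕ → A) :
    argIns n i g lam a i = g (fun t => lam (i + t)) (fun t => a (i + t)) := by
  simp [argIns]

lemma argIns_gt {r i : ℕ} (n : ℕ) (g : CMap k A) (lam : ℕ → k) (a : ℕ → A) (h : i < r) :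
    argIns n i g lam a r = a (r + n) := by
  simp only [argIns, if_neg (by omega : ¬ r < i), if_neg (by omega : ¬ r = i)]

end Aux

section Comp
set_option linter.unusedSectionVars false
variable {k : Type*} [Field k] {A : Type*} [AddCommGroup A] [Module k A]

/-- Composition of insertions, nested case: inserting `h` inside the inserted `g`. -/
lemma comp_inside (q s i d : ℕ) (hd : d ≤ q) (f g h : CMap k A) :
    bulletAt s (i + d) (bulletAt q i f g) h = bulletAt (q + s) i f (bulletAt s d g h) := by
  funext lam a
  rw [bulletAt_def, bulletAt_def, bulletAt_def]
  set L : ℕ → k := lamIns s (i + d) lam with hL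
  set A' : ℕ → A := argIns s (i + d) h lam a with hA
  congr 1
  · -- λ-sequences
    funext r
    rcases lt_trichotomy r i with hr | rfl | hr
    · rw [lamIns_lt _ _ hr, lamIns_lt _ _ hr, hL, lamIns_lt _ _ (by omega)]
    · rw [lamIns_self, lamIns_self,
        sum_split_at (fun t => L (r + t)) d q hd,
        sum_split3 (fun t => lam (r + t)) d q s hd]
      congr 1
      · congr 1
        · exact Finset.sum_congr rfl fun t ht => by
            rw [hL, lamIns_lt _ _ (by rw [mem_range] at ht; omega)]
        · rw [hL, lamIns_self]
          exact Finset.sum_congr rfl fun u _ => by congr 1; omega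
      · exact Finset.sum_congr rfl fun t ht => by
          rw [hL, lamIns_gt _ _ (by rw [mem_Ico] at ht; omega)]
          congr 1; omega
    · rw [lamIns_gt _ _ hr, lamIns_gt _ _ hr, hL, lamIns_gt _ _ (by omega)]
      congr 1; omega
  · -- argument sequences
    funext r
    rcases lt_trichotomy r i with hr | rfl | hr
    · rw [argIns_lt _ _ _ _ hr, argIns_lt _ _ _ _ hr, hA, argIns_lt _ _ _ _ (by omega)]
    · rw [argIns_self, argIns_self, bulletAt_def]
      congr 1
      · funext t
        rcases lt_trichotomy t d with ht | rfl | ht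
        · rw [lamIns_lt _ _ ht, hL, lamIns_lt _ _ (by omega)]
        · rw [lamIns_self, hL, lamIns_self]
          exact Finset.sum_congr rfl fun u _ => by congr 1; omega
        · rw [lamIns_gt _ _ ht, hL, lamIns_gt _ _ (by omega)]
          congr 1; omega
      · funext t
        rcases lt_trichotomy t d with ht | rfl | ht
        · rw [argIns_lt _ _ _ _ ht, hA, argIns_lt _ _ _ _ (by omega)]
        · rw [argIns_self, hA, argIns_self]
          congr 1
          · funext u; congr 1; omega
          · funext u; congr 1; omega
        · rw [argIns_gt _ _ _ _ ht, hA, argIns_gt _ _ _ _ (by omega)]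
          congr 1; omega
    · rw [argIns_gt _ _ _ _ hr, argIns_gt _ _ _ _ hr, hA, argIns_gt _ _ _ _ (by omega)]
      congr 1; omega

/-- `h` depends only on the first `s` λ-values and first `s + 1` arguments. -/
def Dep (s : ℕ) (h : CMap k A) : Prop :=
  ∀ (lam lam' : ℕ → k) (a a' : ℕ → A), (∀ r, r < s → lam r = lam' r) →
    (∀ r, r < s + 1 → a r = a' r) → h lam a = h lam' a'

/-- Composition of insertions, disjoint case: inserting `h` strictly to the left of `g`. -/
lemma comp_left (q s i j : ℕ) (hj : j < i) (f g h : CMap k A) (hdep : Dep s h) :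
    bulletAt s j (bulletAt q i f g) h = bulletAt q (i + s) (bulletAt s j f h) g := by
  funext lam a
  rw [bulletAt_def, bulletAt_def, bulletAt_def, bulletAt_def]
  set L1 : ℕ → k := lamIns s j lam with hL1
  set L2 : ℕ → k := lamIns q (i + s) lam with hL2
  set A1 : ℕ → A := argIns s j h lam a with hA1
  set AG : ℕ → A := argIns q (i + s) g lam a with hAG
  congr 1
  · funext r
    rcases lt_trichotomy r j with hr | rfl | hr
    · rw [lamIns_lt _ _ (by omega : r < i), lamIns_lt _ _ hr, hL1, hL2,
        lamIns_lt _ _ hr, lamIns_lt _ _ (by omega)]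
    · rw [lamIns_lt _ _ (by omega : r < i), hL1, lamIns_self, lamIns_self]
      exact Finset.sum_congr rfl fun u hu => by
        rw [hL2, lamIns_lt _ _ (by rw [mem_range] at hu; omega)]
    · rcases lt_trichotomy r i with hr2 | rfl | hr2
      · rw [lamIns_lt _ _ hr2, hL1, lamIns_gt _ _ hr, lamIns_gt _ _ hr, hL2,
          lamIns_lt _ _ (by omega)]
      · rw [lamIns_self, lamIns_gt _ _ hr, hL2, lamIns_self]
        exact Finset.sum_congr rfl fun t _ => by
          rw [hL1, lamIns_gt _ _ (by omega)]
          congr 1; omega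
      · rw [lamIns_gt _ _ hr2, hL1, lamIns_gt _ _ (by omega), lamIns_gt _ _ hr, hL2,
          lamIns_gt _ _ (by omega)]
        congr 1; omega
  · funext r
    rcases lt_trichotomy r j with hr | rfl | hr
    · rw [argIns_lt _ _ _ _ (by omega : r < i), argIns_lt _ _ _ _ hr, hA1,
        argIns_lt _ _ _ _ hr, hAG, argIns_lt _ _ _ _ (by omega)]
    · rw [argIns_lt _ _ _ _ (by omega : r < i), hA1, argIns_self, argIns_self]
      apply hdep
      · intro u hu
        rw [hL2, lamIns_lt _ _ (by omega)]
      · intro u hu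
        rw [hAG, argIns_lt _ _ _ _ (by omega)]
    · rcases lt_trichotomy r i with hr2 | rfl | hr2
      · rw [argIns_lt _ _ _ _ hr2, hA1, argIns_gt _ _ _ _ hr, argIns_gt _ _ _ _ hr, hAG,
          argIns_lt _ _ _ _ (by omega)]
      · rw [argIns_self, argIns_gt _ _ _ _ hr, hAG, argIns_self]
        congr 1
        · funext t
          rw [hL1, lamIns_gt _ _ (by omega)]
          congr 1; omega
        · funext t
          rw [hA1, argIns_gt _ _ _ _ (by omega)]
          congr 1; omega
      · rw [argIns_gt _ _ _ _ hr2, hA1, argIns_gt _ _ _ _ (by omega), argIns_gt _ _ _ _ hr,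
          hAG, argIns_gt _ _ _ _ (by omega)]
        congr 1; omega

end Comp


section LinPart
set_option linter.unusedSectionVars false
variable {k : Type*} [Field k] {A : Type*} [AddCommGroup A] [Module k A]

/-- Slotwise additivity in each of the first `m + 1` argument slots. -/
def Lin (m : ℕ) (x : CMap k A) : Prop :=
  ∀ (lam : ℕ → k) (b : ℕ → A) (i : ℕ), i ≤ m → ∀ u v : A,
    x lam (Function.update b i (u + v))
      = x lam (Function.update b i u) + x lam (Function.update b i v)

def Lin.hom {m : ℕ} {x : CMap k A} (hx : Lin m x) (lam : ℕ → k) (b : ℕ → A) {i : ℕ}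
    (hi : i ≤ m) : A →+ A :=
  AddMonoidHom.mk' (fun u => x lam (Function.update b i u)) (hx lam b i hi)

lemma Lin.sum {m : ℕ} {x : CMap k A} (hx : Lin m x) (lam : ℕ → k) (b : ℕ → A) {i : ℕ}
    (hi : i ≤ m) {ι : Type*} (s : Finset ι) (c : ι → ℤ) (v : ι → A) :
    x lam (Function.update b i (∑ d ∈ s, c d • v d))
      = ∑ d ∈ s, c d • x lam (Function.update b i (v d)) := by
  calc x lam (Function.update b i (∑ d ∈ s, c d • v d))
      = (hx.hom lam b hi) (∑ d ∈ s, c d • v d) := rfl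
    _ = ∑ d ∈ s, (hx.hom lam b hi) (c d • v d) := map_sum _ _ _
    _ = ∑ d ∈ s, c d • x lam (Function.update b i (v d)) :=
        Finset.sum_congr rfl fun d _ => map_zsmul _ _ _

lemma Lin.zsmul {m : ℕ} {x : CMap k A} (hx : Lin m x) (lam : ℕ → k) (b : ℕ → A) {i : ℕ}
    (hi : i ≤ m) (c : ℤ) (v : A) :
    x lam (Function.update b i (c • v)) = c • x lam (Function.update b i v) :=
  map_zsmul (hx.hom lam b hi) c v

lemma Lin.sub {m : ℕ} {x : CMap k A} (hx : Lin m x) (lam : ℕ → k) (b : ℕ → A) {i : ℕ}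
    (hi : i ≤ m) (u v : A) :
    x lam (Function.update b i (u - v))
      = x lam (Function.update b i u) - x lam (Function.update b i v) :=
  map_sub (hx.hom lam b hi) u v

lemma bulletAt_update (n i : ℕ) (f g : CMap k A) (lam : ℕ → k) (a : ℕ → A) :
    bulletAt n i f g lam a
      = f (lamIns n i lam)
          (Function.update (fun r => if r < i then a r else a (r + n)) i
            (g (fun t => lam (i + t)) (fun t => a (i + t)))) := by
  rw [bulletAt_def]
  congr 1
  funext r
  rcases eq_or_ne r i with rfl | hr
  · rw [argIns_self, Function.update_self]
  · rw [Function.update_of_ne hr]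
    rcases lt_or_gt_of_ne hr with h | h
    · rw [argIns_lt _ _ _ _ h, if_pos h]
    · rw [argIns_gt _ _ _ _ h, if_neg (by omega)]

lemma bulletAt_sum_right {m : ℕ} {x : CMap k A} (hx : Lin m x) {i : ℕ} (hi : i ≤ m)
    (n : ℕ) {ι : Type*} (s : Finset ι) (c : ι → ℤ) (w : ι → CMap k A) (lam : ℕ → k)
    (a : ℕ → A) :
    bulletAt n i x (fun l b => ∑ d ∈ s, c d • w d l b) lam a
      = ∑ d ∈ s, c d • bulletAt n i x (w d) lam a := by
  rw [bulletAt_update]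
  refine (hx.sum (lamIns n i lam) (fun r => if r < i then a r else a (r + n)) hi s c
      (fun d => (w d) (fun t => lam (i + t)) (fun t => a (i + t)))).trans ?_
  exact Finset.sum_congr rfl fun d _ => by rw [bulletAt_update]

lemma bulletAt_zsmul_right {m : ℕ} {x : CMap k A} (hx : Lin m x) {i : ℕ} (hi : i ≤ m)
    (n : ℕ) (c : ℤ) (w : CMap k A) (lam : ℕ → k) (a : ℕ → A) :
    bulletAt n i x (c • w) lam a = c • bulletAt n i x w lam a := by
  rw [bulletAt_update, bulletAt_update]
  exact hx.zsmul _ _ hi c _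

lemma bulletAt_sub_right {m : ℕ} {x : CMap k A} (hx : Lin m x) {i : ℕ} (hi : i ≤ m)
    (n : ℕ) (w₁ w₂ : CMap k A) (lam : ℕ → k) (a : ℕ → A) :
    bulletAt n i x (w₁ - w₂) lam a = bulletAt n i x w₁ lam a - bulletAt n i x w₂ lam a := by
  rw [bulletAt_update, bulletAt_update, bulletAt_update]
  exact hx.sub _ _ hi _ _

lemma bulletAt_zsmul_left (n i : ℕ) (c : ℤ) (F g : CMap k A) (lam : ℕ → k) (a : ℕ → A) :
    bulletAt n i (c • F) g lam a = c • bulletAt n i F g lam a := rfl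

lemma bulletAt_sub_left (n i : ℕ) (F₁ F₂ g : CMap k A) (lam : ℕ → k) (a : ℕ → A) :
    bulletAt n i (F₁ - F₂) g lam a = bulletAt n i F₁ g lam a - bulletAt n i F₂ g lam a := rfl

lemma bullet_apply (m n : ℕ) (f g : CMap k A) (lam : ℕ → k) (a : ℕ → A) :
    bullet m n f g lam a
      = ∑ i ∈ range (m + 1), ((-1 : ℤ) ^ (n * i)) • bulletAt n i f g lam a := rfl

lemma bullet_zsmul_left (m n : ℕ) (c : ℤ) (F g : CMap k A) :
    bullet m n (c • F) g = c • bullet m n F g := by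
  funext lam a
  rw [Pi.smul_apply, Pi.smul_apply, bullet_apply, bullet_apply, Finset.smul_sum]
  exact Finset.sum_congr rfl fun i _ => by rw [bulletAt_zsmul_left, smul_comm]

lemma bullet_sub_left (m n : ℕ) (F₁ F₂ g : CMap k A) :
    bullet m n (F₁ - F₂) g = bullet m n F₁ g - bullet m n F₂ g := by
  funext lam a
  show bullet m n (F₁ - F₂) g lam a = bullet m n F₁ g lam a - bullet m n F₂ g lam a
  rw [bullet_apply, bullet_apply, bullet_apply, ← Finset.sum_sub_distrib]
  exact Finset.sum_congr rfl fun i _ => by rw [bulletAt_sub_left, smul_sub]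

lemma bullet_zsmul_right {m : ℕ} {x : CMap k A} (hx : Lin m x) (n : ℕ) (c : ℤ)
    (w : CMap k A) : bullet m n x (c • w) = c • bullet m n x w := by
  funext lam a
  rw [Pi.smul_apply, Pi.smul_apply, bullet_apply, bullet_apply, Finset.smul_sum]
  refine Finset.sum_congr rfl fun i hi => ?_
  rw [bulletAt_zsmul_right hx (by rw [mem_range] at hi; omega) n c w lam a, smul_comm]

lemma bullet_sub_right {m : ℕ} {x : CMap k A} (hx : Lin m x) (n : ℕ) (w₁ w₂ : CMap k A) :
    bullet m n x (w₁ - w₂) = bullet m n x w₁ - bullet m n x w₂ := by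
  funext lam a
  show bullet m n x (w₁ - w₂) lam a = bullet m n x w₁ lam a - bullet m n x w₂ lam a
  rw [bullet_apply, bullet_apply, bullet_apply, ← Finset.sum_sub_distrib]
  refine Finset.sum_congr rfl fun i hi => ?_
  rw [bulletAt_sub_right hx (by rw [mem_range] at hi; omega) n w₁ w₂ lam a, smul_sub]

lemma sign_shift (e f : ℕ) : ((-1 : ℤ)) ^ e = (-1) ^ f * (-1) ^ (e + f) := by
  rw [pow_add, mul_comm ((-1:ℤ)^e) ((-1:ℤ)^f), ← mul_assoc, ← pow_add]
  have h : Even (f + f) := ⟨f, rfl⟩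
  rw [h.neg_one_pow, one_mul]

/-- Splitting of a double bullet into "left + nested + right" insertions. -/
lemma bullet_split {a : ℕ} {x : CMap k A} (hx : Lin a x) (b c : ℕ) (y z : CMap k A)
    (hy : Dep b y) (lam : ℕ → k) (a₀ : ℕ → A) :
    bullet (a + b) c (bullet a b x y) z lam a₀
      = ((∑ i ∈ range (a+1), ∑ j ∈ range i,
            ((-1:ℤ) ^ (b*i + c*j)) • bulletAt c j (bulletAt b i x y) z lam a₀)
          + bullet a (b + c) x (bullet b c y z) lam a₀)
        + ∑ i ∈ range (a+1), ∑ t ∈ Ico (i+1) (a+1),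
            ((-1:ℤ) ^ (b*i + c*t + c*b)) • bulletAt b i (bulletAt c t x z) y lam a₀ := by
  have e1 : ∀ j : ℕ, bulletAt c j (bullet a b x y) z lam a₀
      = ∑ i ∈ range (a+1), ((-1:ℤ)^(b*i)) • bulletAt c j (bulletAt b i x y) z lam a₀ :=
    fun j => rfl
  have step1 : bullet (a + b) c (bullet a b x y) z lam a₀
      = ∑ i ∈ range (a+1), ∑ j ∈ range (a+b+1),
          (((-1:ℤ)^(c*j)) * ((-1:ℤ)^(b*i))) • bulletAt c j (bulletAt b i x y) z lam a₀ := by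
    rw [bullet_apply, ← Finset.sum_comm]
    refine Finset.sum_congr rfl fun j _ => ?_
    rw [e1 j, Finset.smul_sum]
    exact Finset.sum_congr rfl fun i _ => by rw [smul_smul]
  rw [step1]
  have step2 : ∀ i ∈ range (a+1),
      ∑ j ∈ range (a+b+1),
          (((-1:ℤ)^(c*j)) * ((-1:ℤ)^(b*i))) • bulletAt c j (bulletAt b i x y) z lam a₀
        = ((∑ j ∈ range i,
              ((-1:ℤ) ^ (b*i + c*j)) • bulletAt c j (bulletAt b i x y) z lam a₀)
            + ((-1:ℤ)^((b+c)*i)) • bulletAt (b+c) i x (bullet b c y z) lam a₀)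
          + ∑ t ∈ Ico (i+1) (a+1),
              ((-1:ℤ) ^ (b*i + c*t + c*b)) • bulletAt b i (bulletAt c t x z) y lam a₀ := by
    intro i hi
    rw [mem_range] at hi
    rw [sum_split3 (fun j => (((-1:ℤ)^(c*j)) * ((-1:ℤ)^(b*i)))
        • bulletAt c j (bulletAt b i x y) z lam a₀) i a b (by omega)]
    congr 1
    · congr 1
      · exact Finset.sum_congr rfl fun j _ => by
          rw [← pow_add]; congr 2; ring
      · -- nested part
        have einner : ∀ u ∈ range (b+1),
            (((-1:ℤ)^(c*(i+u))) * ((-1:ℤ)^(b*i)))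
                • bulletAt c (i+u) (bulletAt b i x y) z lam a₀
              = ((-1:ℤ)^((b+c)*i)) • (((-1:ℤ)^(c*u))
                  • bulletAt (b+c) i x (bulletAt c u y z) lam a₀) := by
          intro u hu
          rw [mem_range] at hu
          rw [comp_inside b c i u (by omega) x y z, smul_smul]
          congr 1
          rw [← pow_add, ← pow_add]
          congr 1
          ring
        rw [Finset.sum_congr rfl einner, ← Finset.smul_sum]
        congr 1
        rw [← bulletAt_sum_right hx (by omega : i ≤ a) (b+c) (range (b+1))
            (fun u => ((-1:ℤ)^(c*u))) (fun u => bulletAt c u y z) lam a₀]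
        rfl
    · refine Finset.sum_congr rfl fun t ht => ?_
      rw [mem_Ico] at ht
      rw [← comp_left c b t i (by omega) x z y hy]
      rw [← pow_add]
      congr 2
      ring
  rw [Finset.sum_congr rfl step2, Finset.sum_add_distrib, Finset.sum_add_distrib]
  congr 2

/-- Pre-Lie symmetry of the associator of `•`. -/
lemma preLie {a : ℕ} {x : CMap k A} (hx : Lin a x) (b c : ℕ) (y z : CMap k A)
    (hy : Dep b y) (hz : Dep c z) :
    bullet (a+b) c (bullet a b x y) z - bullet a (b+c) x (bullet b c y z)
      = ((-1:ℤ) ^ (b*c)) •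
        (bullet (a+c) b (bullet a c x z) y - bullet a (c+b) x (bullet c b z y)) := by
  funext lam a₀
  show bullet (a+b) c (bullet a b x y) z lam a₀ - bullet a (b+c) x (bullet b c y z) lam a₀
      = ((-1:ℤ) ^ (b*c)) • (bullet (a+c) b (bullet a c x z) y lam a₀
          - bullet a (c+b) x (bullet c b z y) lam a₀)
  rw [bullet_split hx b c y z hy lam a₀, bullet_split hx c b z y hz lam a₀]
  have hL : (∑ i ∈ range (a+1), ∑ j ∈ range i,
        ((-1:ℤ) ^ (b*i + c*j)) • bulletAt c j (bulletAt b i x y) z lam a₀)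
      = ((-1:ℤ)^(b*c)) • ∑ i ∈ range (a+1), ∑ t ∈ Ico (i+1) (a+1),
          ((-1:ℤ) ^ (c*i + b*t + b*c)) • bulletAt c i (bulletAt b t x y) z lam a₀ := by
    rw [sum_tri_swap (fun i j => ((-1:ℤ) ^ (b*i + c*j))
        • bulletAt c j (bulletAt b i x y) z lam a₀) a, Finset.smul_sum]
    refine Finset.sum_congr rfl fun i _ => ?_
    rw [Finset.smul_sum]
    refine Finset.sum_congr rfl fun t _ => ?_
    rw [smul_smul]
    congr 1
    rw [show c*i + b*t + b*c = b*t + c*i + b*c from by ring]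
    exact sign_shift (b*t + c*i) (b*c)
  have hR : (∑ i ∈ range (a+1), ∑ t ∈ Ico (i+1) (a+1),
        ((-1:ℤ) ^ (b*i + c*t + c*b)) • bulletAt b i (bulletAt c t x z) y lam a₀)
      = ((-1:ℤ)^(b*c)) • ∑ i ∈ range (a+1), ∑ j ∈ range i,
          ((-1:ℤ) ^ (c*i + b*j)) • bulletAt b j (bulletAt c i x z) y lam a₀ := by
    rw [← sum_tri_swap (fun i j => ((-1:ℤ) ^ (b*j + c*i + c*b))
        • bulletAt b j (bulletAt c i x z) y lam a₀) a, Finset.smul_sum]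
    refine Finset.sum_congr rfl fun i _ => ?_
    rw [Finset.smul_sum]
    refine Finset.sum_congr rfl fun j _ => ?_
    rw [smul_smul]
    congr 1
    rw [← pow_add, show b*c + (c*i + b*j) = b*j + c*i + c*b from by ring]
  rw [hL, hR]
  rw [smul_sub, smul_add, smul_add]
  abel

end LinPart

section Bracket
set_option linter.unusedSectionVars false
variable {k : Type*} [Field k] {A : Type*} [AddCommGroup A] [Module k A]

lemma cbracketU_eq (m n : ℕ) (f g : CMap k A) :
    cbracketU m n f g = bullet m n f g - ((-1:ℤ)^(m*n)) • bullet n m g f := rfl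

lemma cbracketU_apply (m n : ℕ) (f g : CMap k A) (lam : ℕ → k) (a : ℕ → A) :
    cbracketU m n f g lam a
      = bullet m n f g lam a - ((-1:ℤ)^(m*n)) • bullet n m g f lam a := rfl

lemma IsU.lin {D : A →ₗ[k] A} {p : ℕ} {φ : CMap k A} (h : IsU D p φ) : Lin p φ :=
  fun lam b i hi u v => h.map_add lam b i (by omega) u v

lemma IsU.dep {D : A →ₗ[k] A} {p : ℕ} {φ : CMap k A} (h : IsU D p φ) : Dep p φ :=
  fun lam lam' a a' h1 h2 => h.depends lam lam' a a' h1 h2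

lemma rho_apply (S : AssocConfAlg k A) (lam : ℕ → k) (a : ℕ → A) :
    rhoOf S lam a = S.mul (a 0) (a 1) (lam 0) := rfl

lemma lin_rho (S : AssocConfAlg k A) : Lin 1 (rhoOf S) := by
  intro lam b i hi u v
  interval_cases i <;>
    simp [rho_apply, Function.update_apply, S.add_left, S.add_right]

lemma dep_rho (S : AssocConfAlg k A) : Dep 1 (rhoOf S) := by
  intro lam lam' a a' h1 h2
  rw [rho_apply, rho_apply, h1 0 (by omega), h2 0 (by omega), h2 1 (by omega)]

lemma cbracketU_zsmul_left {n : ℕ} {g : CMap k A} (hg : Lin n g) (m : ℕ) (c : ℤ)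
    (F : CMap k A) : cbracketU m n (c • F) g = c • cbracketU m n F g := by
  rw [cbracketU_eq, cbracketU_eq, bullet_zsmul_left, bullet_zsmul_right hg,
    smul_comm ((-1:ℤ)^(m*n)) c, ← smul_sub]

lemma cbracketU_zsmul_right {m : ℕ} {f : CMap k A} (hf : Lin m f) (n : ℕ) (c : ℤ)
    (G : CMap k A) : cbracketU m n f (c • G) = c • cbracketU m n f G := by
  rw [cbracketU_eq, cbracketU_eq, bullet_zsmul_right hf, bullet_zsmul_left,
    smul_comm ((-1:ℤ)^(m*n)) c, ← smul_sub]

/-- Graded Jacobi identity for the bracket on `U`-spaces. -/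
lemma jacobi {a b c : ℕ} {x y z : CMap k A} (hx : Lin a x) (hy : Lin b y) (hz : Lin c z)
    (dx : Dep a x) (dy : Dep b y) (dz : Dep c z) :
    cbracketU a (b+c) x (cbracketU b c y z)
      = cbracketU (a+b) c (cbracketU a b x y) z
        + ((-1:ℤ)^(a*b)) • cbracketU b (a+c) y (cbracketU a c x z) := by
  have P1 := preLie hx b c y z dy dz
  have P2 := preLie hy a c x z dx dz
  have P3 := preLie hz a b x y dx dy
  rw [Nat.add_comm c b] at P1
  rw [Nat.add_comm b a, Nat.add_comm c a] at P2
  rw [Nat.add_comm c a, Nat.add_comm c b, Nat.add_comm b a] at P3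
  have hA1 := sub_eq_iff_eq_add.mp P1
  have hC1 := sub_eq_iff_eq_add.mp P2
  have hE1 := sub_eq_iff_eq_add.mp P3
  simp only [cbracketU_eq, bullet_sub_right hx, bullet_zsmul_right hx,
    bullet_sub_right hy, bullet_zsmul_right hy, bullet_sub_right hz, bullet_zsmul_right hz,
    bullet_sub_left, bullet_zsmul_left]
  rw [hA1, hC1, hE1]
  have hU : ((-1:ℤ)^(a*b)) * ((-1:ℤ)^(a*b)) = 1 := by
    rw [← pow_add]; exact Even.neg_one_pow ⟨a*b, rfl⟩
  have hV : ((-1:ℤ)^(a*c)) * ((-1:ℤ)^(a*c)) = 1 := by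
    rw [← pow_add]; exact Even.neg_one_pow ⟨a*c, rfl⟩
  have hW : ((-1:ℤ)^(b*c)) * ((-1:ℤ)^(b*c)) = 1 := by
    rw [← pow_add]; exact Even.neg_one_pow ⟨b*c, rfl⟩
  simp only [Nat.mul_add, Nat.add_mul, Nat.mul_comm b a, pow_add]
  have k2 : ∀ e : ℕ, ((-1:ℤ)) ^ (e * 2) = 1 := fun e => Even.neg_one_pow ⟨e, by ring⟩
  have k3 : ∀ e : ℕ, ((-1:ℤ)) ^ (e * 3) = (-1) ^ e := fun e => by
    rw [show e * 3 = e * 2 + e from by ring, pow_add, k2, one_mul]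
  match_scalars <;>
    (ring_nf;
     try (simp only [Nat.mul_comm b a, Nat.mul_comm c b, Nat.mul_comm c a, k2, k3, one_mul,
       mul_one]);
     try ring)
end Bracket

section Hdiff
set_option linter.unusedSectionVars false
variable {k : Type*} [Field k] {A : Type*} [AddCommGroup A] [Module k A]

lemma mul3_congr (mul : A → A → k → A) {x x' y y' : A} {l l' : k}
    (hx : x = x') (hy : y = y') (hl : l = l') : mul x y l = mul x' y' l' := by
  rw [hx, hy, hl]

lemma hdiff_apply (mul : A → A → k → A) (n : ℕ) (φ : CMap k A) (lam : ℕ → k) (a : ℕ → A) :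
    hdiff mul n φ lam a
      = mul (a 0) (φ (fun r => lam (r + 1)) (fun r => a (r + 1))) (lam 0)
        + ∑ i ∈ range n, ((-1 : ℤ) ^ (i + 1)) •
            φ (fun r => if r < i then lam r
                else if r = i then lam i + lam (i + 1) else lam (r + 1))
              (fun r => if r < i then a r
                else if r = i then mul (a i) (a (i + 1)) (lam i)
                else a (r + 1))
        + ((-1 : ℤ) ^ (n + 1)) • mul (φ lam a) (a n) (∑ j ∈ range n, lam j) := rfl

/-- The Hochschild differential is, up to sign, the bracket with `ρ`. -/
lemma hdiff_eq_bracket (S : AssocConfAlg k A) (p : ℕ) (φ : CMap k A) :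
    hdiff S.mul (p+1) φ = ((-1:ℤ)^p) • cbracketU 1 p (rhoOf S) φ := by
  funext lam a
  have hB0 : bulletAt p 0 (rhoOf S) φ lam a
      = S.mul (φ lam a) (a (p+1)) (∑ t ∈ range (p+1), lam t) := by
    rw [bulletAt_def]
    show S.mul (argIns p 0 φ lam a 0) (argIns p 0 φ lam a 1) (lamIns p 0 lam 0) = _
    rw [argIns_self, argIns_gt _ _ _ _ (by omega : 0 < 1), lamIns_self]
    have e1 : (fun t => lam (0+t)) = lam := by funext t; congr 1; omega
    have e2 : (fun t => a (0+t)) = a := by funext t; congr 1; omega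
    rw [e1, e2]
    exact mul3_congr S.mul rfl (congrArg a (by omega))
      (Finset.sum_congr rfl fun t _ => congrArg lam (by omega))
  have hB1 : bulletAt p 1 (rhoOf S) φ lam a
      = S.mul (a 0) (φ (fun r => lam (r+1)) (fun r => a (r+1))) (lam 0) := by
    rw [bulletAt_def]
    show S.mul (argIns p 1 φ lam a 0) (argIns p 1 φ lam a 1) (lamIns p 1 lam 0) = _
    rw [argIns_lt _ _ _ _ (by omega : 0 < 1), argIns_self, lamIns_lt _ _ (by omega : 0 < 1)]
    exact mul3_congr S.mul rfl
      (congrArg₂ φ (funext fun t => congrArg lam (by omega))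
        (funext fun t => congrArg a (by omega))) rfl
  have hC : ∀ i, bulletAt 1 i φ (rhoOf S) lam a
      = φ (fun r => if r < i then lam r else if r = i then lam i + lam (i+1) else lam (r+1))
          (fun r => if r < i then a r
            else if r = i then S.mul (a i) (a (i+1)) (lam i) else a (r+1)) := by
    intro i
    rw [bulletAt_def]
    congr 1
    funext r
    rcases lt_trichotomy r i with h | rfl | h
    · rw [lamIns_lt _ _ h, if_pos h]
    · rw [lamIns_self, if_neg (lt_irrefl _), if_pos rfl, Finset.sum_range_succ,
        Finset.sum_range_one]
      simp
    · rw [lamIns_gt _ _ h, if_neg (by omega : ¬ r < i), if_neg (by omega : ¬ r = i)]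
  have hb : bullet 1 p (rhoOf S) φ lam a
      = ((-1:ℤ)^(p*0)) • bulletAt p 0 (rhoOf S) φ lam a
        + ((-1:ℤ)^(p*1)) • bulletAt p 1 (rhoOf S) φ lam a := by
    rw [bullet_apply, Finset.sum_range_succ, Finset.sum_range_one]
  rw [hdiff_apply, Pi.smul_apply, Pi.smul_apply, cbracketU_apply, hb, hB0, hB1, bullet_apply]
  have hsum : ∑ i ∈ range (p+1), ((-1:ℤ)^(1*i)) • bulletAt 1 i φ (rhoOf S) lam a
      = ∑ i ∈ range (p+1), ((-1:ℤ)^i) •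
          φ (fun r => if r < i then lam r else if r = i then lam i + lam (i+1) else lam (r+1))
            (fun r => if r < i then a r
              else if r = i then S.mul (a i) (a (i+1)) (lam i) else a (r+1)) :=
    Finset.sum_congr rfl fun i _ => by rw [hC i, one_mul]
  rw [hsum]
  have hflip : ∑ i ∈ range (p+1), ((-1:ℤ)^(i+1)) •
          φ (fun r => if r < i then lam r else if r = i then lam i + lam (i+1) else lam (r+1))
            (fun r => if r < i then a r
              else if r = i then S.mul (a i) (a (i+1)) (lam i) else a (r+1))
      = (-1:ℤ) • ∑ i ∈ range (p+1), ((-1:ℤ)^i) •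
          φ (fun r => if r < i then lam r else if r = i then lam i + lam (i+1) else lam (r+1))
            (fun r => if r < i then a r
              else if r = i then S.mul (a i) (a (i+1)) (lam i) else a (r+1)) := by
    rw [Finset.smul_sum]
    exact Finset.sum_congr rfl fun i _ => by rw [smul_smul, pow_succ, mul_comm]
  rw [hflip]
  have k2 : ∀ e : ℕ, ((-1:ℤ)) ^ (e * 2) = 1 := fun e => Even.neg_one_pow ⟨e, by ring⟩
  match_scalars <;> (ring_nf; try (simp only [k2, one_mul, mul_one]); try ring)

end Hdiff


/-- Let `A` be an associative conformal algebra.  For any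
`f ∈ C^m(A, A)` and `g ∈ C^n(A, A)` with `m, n ≥ 1`, the Hochschild differential is a
graded derivation of the degree `-1` bracket:
`d_{m+n-1}([f, g]) = (-1)^{n+1} [d_m(f), g] + [f, d_n(g)]`. -/
theorem hochschild_diff_graded_derivation_bracket {k A : Type*} [Field k] [CharZero k]
    [AddCommGroup A] [Module k A] (S : AssocConfAlg k A) (m n : ℕ)
    (hm : 1 ≤ m) (hn : 1 ≤ n) (f g : CMap k A)
    (hf : IsU S.D (m - 1) f) (hg : IsU S.D (n - 1) g) :
    hdiff S.mul (m + n - 1) (gbracket m n f g)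
      = ((-1 : ℤ) ^ (n + 1)) • gbracket (m + 1) n (hdiff S.mul m f) g
        + gbracket m (n + 1) f (hdiff S.mul n g) := by
  obtain ⟨p, rfl⟩ : ∃ p, m = p + 1 := ⟨m - 1, by omega⟩
  obtain ⟨q, rfl⟩ : ∃ q, n = q + 1 := ⟨n - 1, by omega⟩
  have hfl : Lin p f := hf.lin
  have hgl : Lin q g := hg.lin
  have hfd : Dep p f := hf.dep
  have hgd : Dep q g := hg.dep
  have e1 : p + 1 + (q + 1) - 1 = (p + q) + 1 := by omega
  have e2 : gbracket (p+1) (q+1) f g = cbracketU p q f g := rfl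
  have e3 : gbracket (p+1+1) (q+1) (hdiff S.mul (p+1) f) g
      = cbracketU (p+1) q (hdiff S.mul (p+1) f) g := rfl
  have e4 : gbracket (p+1) (q+1+1) f (hdiff S.mul (q+1) g)
      = cbracketU p (q+1) f (hdiff S.mul (q+1) g) := rfl
  rw [e1, e2, e3, e4, hdiff_eq_bracket S (p+q), hdiff_eq_bracket S p, hdiff_eq_bracket S q,
    cbracketU_zsmul_left hgl (p+1) ((-1:ℤ)^p) (cbracketU 1 p (rhoOf S) f),
    cbracketU_zsmul_right hfl (q+1) ((-1:ℤ)^q) (cbracketU 1 q (rhoOf S) g)]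
  have J := jacobi (lin_rho S) hfl hgl (dep_rho S) hfd hgd
  rw [Nat.add_comm 1 p, Nat.add_comm 1 q, one_mul] at J
  rw [J]
  have k2 : ∀ e : ℕ, ((-1:ℤ)) ^ (e * 2) = 1 := fun e => Even.neg_one_pow ⟨e, by ring⟩
  match_scalars <;>
    (ring_nf; try (simp only [pow_add, k2, one_mul, mul_one]); try ring)
end

section
/- Let A be an associative conformal algebra. The Hochschild differential is a graded derivation with respect to the cup product: for f ∈ C^m(A,A) and g ∈ C^n(A,A), m, n ≥ 0, d_{m+n}(f ⊔ g) = d_m(f) ⊔ g + (−1)^m f ⊔ d_n(g). -/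
open Finset

variable {k : Type*} [Field k]
variable {A : Type*} [AddCommGroup A] [Module k A]

/-! ### Infrastructure: polynomial functions with vector coefficients -/

section PolyInfra

/-- Evaluation of a coefficient family at a point, as a linear map. -/
noncomputable def evalAtP (x : k) : (ℕ →₀ A) →ₗ[k] A :=
  Finsupp.lsum k fun j => x ^ j • LinearMap.id

lemma evalAtP_apply (x : k) (c : ℕ →₀ A) : evalAtP x c = c.sum fun j v => x ^ j • v := by
  simp [evalAtP, Finsupp.sum]

/-- Substitution `λ := -D` on a coefficient family, as a linear map. -/
noncomputable def TD (D : A →ₗ[k] A) : (ℕ →₀ A) →ₗ[k] A :=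
  Finsupp.lsum k fun j => (-D) ^ j

lemma TD_apply (D : A →ₗ[k] A) (c : ℕ →₀ A) : TD D c = c.sum fun j v => ((-D) ^ j) v := by
  simp [TD, Finsupp.sum]

lemma negD_pow_apply (D : A →ₗ[k] A) : ∀ (j : ℕ) (v : A),
    ((-D) ^ j) v = ((-1 : ℤ) ^ j) • (D ^ j) v := by
  intro j
  induction j with
  | zero => intro v; simp
  | succ j ih =>
      intro v
      have h1 : ((-D) ^ (j + 1)) v = ((-D) ^ j) (-(D v)) := by
        rw [pow_succ, Module.End.mul_apply, LinearMap.neg_apply]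
      have h2 : (D ^ (j + 1)) v = (D ^ j) (D v) := by rw [pow_succ, Module.End.mul_apply]
      rw [h1, map_neg, ih, h2, pow_succ, mul_smul]
      simp

lemma evalAtP_injective [CharZero k] (c : ℕ →₀ A) (h : ∀ x : k, evalAtP x c = 0) : c = 0 := by
  refine Finsupp.ext fun j => ?_
  rw [Finsupp.coe_zero, Pi.zero_apply]
  rw [← (Module.forall_dual_apply_eq_zero_iff k (c j))]
  intro φ
  classical
  set p : Polynomial k := ∑ i ∈ c.support, Polynomial.C (φ (c i)) * Polynomial.X ^ i with hp
  have heval : ∀ x : k, p.eval x = 0 := by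
    intro x
    have : p.eval x = φ (evalAtP x c) := by
      rw [evalAtP_apply, map_finsuppSum, hp]
      rw [Polynomial.eval_finset_sum]
      refine Finset.sum_congr rfl fun i _ => ?_
      show _ = φ (x ^ i • c i)
      rw [map_smul, Polynomial.eval_mul, Polynomial.eval_C, Polynomial.eval_pow,
        Polynomial.eval_X, smul_eq_mul, mul_comm]
    rw [this, h x, map_zero]
  have hp0 : p = 0 := Polynomial.funext (by simpa using heval)
  have hcoeff : p.coeff j = φ (c j) := by
    rw [hp, Polynomial.finset_sum_coeff]
    simp only [Polynomial.coeff_C_mul, Polynomial.coeff_X_pow]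
    rw [Finset.sum_congr rfl (fun i _ => by rw [mul_ite, mul_one, mul_zero])]
    rw [Finset.sum_ite_eq c.support j (fun i => φ (c i))]
    split
    · rfl
    · rw [Finsupp.notMem_support_iff.mp ‹_›, map_zero]
  rw [← hcoeff, hp0, Polynomial.coeff_zero]

lemma polyCoeffs_spec {F : k → A} (h : IsPolyFun F) :
    ∀ x, F x = (polyCoeffs F).sum fun j v => x ^ j • v := by
  rw [polyCoeffs]
  intro x
  rw [dif_pos h]
  exact h.choose_spec x

lemma polyCoeffs_eq [CharZero k] {F : k → A} {c : ℕ →₀ A}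
    (h : ∀ x, F x = c.sum fun j v => x ^ j • v) : polyCoeffs F = c := by
  have hF : IsPolyFun F := ⟨c, h⟩
  have h2 := polyCoeffs_spec hF
  have h3 : ∀ x : k, evalAtP x (polyCoeffs F - c) = 0 := by
    intro x
    rw [map_sub, evalAtP_apply, evalAtP_apply, ← h2 x, ← h x, sub_self]
  have := evalAtP_injective _ h3
  rwa [sub_eq_zero] at this

lemma evalNegD_eq_TD [CharZero k] (D : A →ₗ[k] A) {F : k → A} {c : ℕ →₀ A}
    (h : ∀ x, F x = c.sum fun j v => x ^ j • v) : evalNegD D F = TD D c := by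
  rw [evalNegD, polyCoeffs_eq h, TD_apply]
  exact Finsupp.sum_congr fun j _ => (negD_pow_apply D j (c j)).symm

/-- The workhorse: `evalNegD` of a function presented as a polynomial combination. -/
lemma evalNegD_eq_sum [CharZero k] (D : A →ₗ[k] A) {F : k → A} {ι : Type*} (s : Finset ι)
    (p : ι → Polynomial k) (e : ι → A)
    (h : ∀ x, F x = ∑ i ∈ s, (p i).eval x • e i) :
    evalNegD D F = ∑ i ∈ s, Polynomial.aeval (-D : A →ₗ[k] A) (p i) (e i) := by
  classical
  set c : ℕ →₀ A := ∑ i ∈ s, ∑ j ∈ (p i).support, Finsupp.single j ((p i).coeff j • e i)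
      with hc
  have hpres : ∀ x, F x = c.sum fun j v => x ^ j • v := by
    intro x
    rw [h, ← evalAtP_apply, hc, map_sum]
    refine Finset.sum_congr rfl fun i _ => ?_
    rw [map_sum]
    rw [Finset.sum_congr rfl fun j _ => evalAtP_apply x _]
    rw [Finset.sum_congr rfl fun j (_ : j ∈ (p i).support) =>
      Finsupp.sum_single_index (by rw [smul_zero])]
    rw [Polynomial.eval_eq_sum, Polynomial.sum_def, Finset.sum_smul]
    refine Finset.sum_congr rfl fun j _ => ?_
    rw [smul_smul, mul_comm]
  rw [evalNegD_eq_TD D hpres, hc, map_sum]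
  refine Finset.sum_congr rfl fun i _ => ?_
  rw [map_sum, Polynomial.aeval_endomorphism, Polynomial.sum_def]
  refine Finset.sum_congr rfl fun j _ => ?_
  rw [TD_apply]
  rw [Finsupp.sum_single_index]
  · exact map_smul _ _ _
  · exact map_zero _

end PolyInfra

/-! ### Algebraic properties of `evalNegD` -/

section EvalNegDAlg
variable [CharZero k]

lemma IsPolyFun.addF {F G : k → A} (hF : IsPolyFun F) (hG : IsPolyFun G) :
    IsPolyFun (fun x => F x + G x) := by
  obtain ⟨c, hc⟩ := hF; obtain ⟨d, hd⟩ := hG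
  refine ⟨c + d, fun x => ?_⟩
  show F x + G x = _
  rw [hc, hd, ← evalAtP_apply, ← evalAtP_apply, ← evalAtP_apply, map_add]

lemma IsPolyFun.zsmulF {F : k → A} (z : ℤ) (hF : IsPolyFun F) :
    IsPolyFun (fun x => z • F x) := by
  obtain ⟨c, hc⟩ := hF
  refine ⟨z • c, fun x => ?_⟩
  show z • F x = _
  rw [hc, ← evalAtP_apply, ← evalAtP_apply, map_zsmul]

lemma IsPolyFun.zeroF : IsPolyFun (fun _ : k => (0 : A)) :=
  ⟨0, fun x => by rw [Finsupp.sum_zero_index]⟩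

lemma IsPolyFun.sumF {ι : Type*} (s : Finset ι) (F : ι → k → A)
    (h : ∀ i ∈ s, IsPolyFun (F i)) : IsPolyFun (fun x => ∑ i ∈ s, F i x) := by
  classical
  induction s using Finset.induction_on with
  | empty => simpa using IsPolyFun.zeroF
  | insert i s hni ih =>
      simp only [Finset.sum_insert hni]
      exact (h i (Finset.mem_insert_self i s)).addF
        (ih fun j hj => h j (Finset.mem_insert_of_mem hj))

lemma evalNegD_add (D : A →ₗ[k] A) {F G : k → A} (hF : IsPolyFun F) (hG : IsPolyFun G) :
    evalNegD D (fun x => F x + G x) = evalNegD D F + evalNegD D G := by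
  have hc := polyCoeffs_spec hF
  have hd := polyCoeffs_spec hG
  have h1 : ∀ x : k, F x + G x = (polyCoeffs F + polyCoeffs G).sum fun j v => x ^ j • v := by
    intro x
    rw [← evalAtP_apply, map_add, evalAtP_apply, evalAtP_apply, hc, hd]
  rw [evalNegD_eq_TD D h1, evalNegD_eq_TD D hc, evalNegD_eq_TD D hd, map_add]

lemma evalNegD_zsmul (D : A →ₗ[k] A) {F : k → A} (z : ℤ) (hF : IsPolyFun F) :
    evalNegD D (fun x => z • F x) = z • evalNegD D F := by
  have hc := polyCoeffs_spec hF
  have h1 : ∀ x : k, z • F x = (z • polyCoeffs F).sum fun j v => x ^ j • v := by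
    intro x
    rw [← evalAtP_apply, map_zsmul, evalAtP_apply, hc]
  rw [evalNegD_eq_TD D h1, evalNegD_eq_TD D hc, map_zsmul]

lemma evalNegD_sub (D : A →ₗ[k] A) {F G : k → A} (hF : IsPolyFun F) (hG : IsPolyFun G) :
    evalNegD D (fun x => F x - G x) = evalNegD D F - evalNegD D G := by
  have hc := polyCoeffs_spec hF
  have hd := polyCoeffs_spec hG
  have h1 : ∀ x : k, F x - G x = (polyCoeffs F - polyCoeffs G).sum fun j v => x ^ j • v := by
    intro x
    rw [← evalAtP_apply, map_sub, evalAtP_apply, evalAtP_apply, hc, hd]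
  rw [evalNegD_eq_TD D h1, evalNegD_eq_TD D hc, evalNegD_eq_TD D hd, map_sub]

lemma evalNegD_sum (D : A →ₗ[k] A) {ι : Type*} (s : Finset ι) (F : ι → k → A)
    (h : ∀ i ∈ s, IsPolyFun (F i)) :
    evalNegD D (fun x => ∑ i ∈ s, F i x) = ∑ i ∈ s, evalNegD D (F i) := by
  classical
  induction s using Finset.induction_on with
  | empty =>
      simp only [Finset.sum_empty]
      have h0 : ∀ x : k, (0 : A) = (0 : ℕ →₀ A).sum fun j v => x ^ j • v := by
        intro x; rw [Finsupp.sum_zero_index]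
      rw [evalNegD_eq_TD D h0, map_zero]
  | insert i s hni ih =>
      simp only [Finset.sum_insert hni]
      rw [evalNegD_add D (h i (Finset.mem_insert_self i s))
        (IsPolyFun.sumF s F fun j hj => h j (Finset.mem_insert_of_mem hj)),
        ih fun j hj => h j (Finset.mem_insert_of_mem hj)]

end EvalNegDAlg

/-! ### Conformal-algebra lemmas -/

section Conf
variable (S : AssocConfAlg k A)

/-- Left multiplication `x ↦ x ∘_μ y` as a linear map. -/
def mulLM (y : A) (μ : k) : A →ₗ[k] A where
  toFun := fun x => S.mul x y μ
  map_add' := fun u v => S.add_left u v y μ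
  map_smul' := fun r u => S.smul_left r u y μ

/-- Right multiplication `z ↦ x ∘_μ z` as a linear map. -/
def mulRM (x : A) (μ : k) : A →ₗ[k] A where
  toFun := fun z => S.mul x z μ
  map_add' := fun u v => S.add_right x u v μ
  map_smul' := fun r u => S.smul_right r x u μ

@[simp] lemma mulLM_apply (y : A) (μ : k) (x : A) : mulLM S y μ x = S.mul x y μ := rfl
@[simp] lemma mulRM_apply (x : A) (μ : k) (z : A) : mulRM S x μ z = S.mul x z μ := rfl

lemma mul_zsmul_left (z : ℤ) (x y : A) (μ : k) : S.mul (z • x) y μ = z • S.mul x y μ :=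
  map_zsmul (mulLM S y μ) z x

lemma mul_zsmul_right (z : ℤ) (x y : A) (μ : k) : S.mul x (z • y) μ = z • S.mul x y μ :=
  map_zsmul (mulRM S x μ) z y

lemma mul_sum_left {ι : Type*} (t : Finset ι) (h : ι → A) (y : A) (μ : k) :
    S.mul (∑ i ∈ t, h i) y μ = ∑ i ∈ t, S.mul (h i) y μ :=
  map_sum (mulLM S y μ) h t

lemma mul_sum_right {ι : Type*} (t : Finset ι) (h : ι → A) (x : A) (μ : k) :
    S.mul x (∑ i ∈ t, h i) μ = ∑ i ∈ t, S.mul x (h i) μ :=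
  map_sum (mulRM S x μ) h t

lemma mul_sub_left (u v y : A) (μ : k) : S.mul (u - v) y μ = S.mul u y μ - S.mul v y μ :=
  map_sub (mulLM S y μ) u v

lemma mul_sub_right (x u v : A) (μ : k) : S.mul x (u - v) μ = S.mul x u μ - S.mul x v μ :=
  map_sub (mulRM S x μ) u v

lemma mul_neg_left (x y : A) (μ : k) : S.mul (-x) y μ = -(S.mul x y μ) :=
  map_neg (mulLM S y μ) x

lemma mul_neg_right (x y : A) (μ : k) : S.mul x (-y) μ = -(S.mul x y μ) :=
  map_neg (mulRM S x μ) y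

lemma mul_finsupp_sum_left (c : ℕ →₀ A) (h : ℕ → A → A) (y : A) (μ : k) :
    S.mul (c.sum h) y μ = c.sum fun j v => S.mul (h j v) y μ :=
  map_finsuppSum (mulLM S y μ) c h

lemma mul_finsupp_sum_right (c : ℕ →₀ A) (h : ℕ → A → A) (x : A) (μ : k) :
    S.mul x (c.sum h) μ = c.sum fun j v => S.mul x (h j v) μ :=
  map_finsuppSum (mulRM S x μ) c h

lemma negD_pow_left : ∀ (j : ℕ) (v y : A) (μ : k),
    S.mul (((-S.D) ^ j) v) y μ = (μ ^ j) • S.mul v y μ := by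
  intro j
  induction j with
  | zero => intro v y μ; rw [pow_zero, pow_zero, Module.End.one_apply, one_smul]
  | succ j ih =>
      intro v y μ
      have h1 : ((-S.D) ^ (j + 1)) v = ((-S.D) ^ j) (-(S.D v)) := by
        rw [pow_succ, Module.End.mul_apply, LinearMap.neg_apply]
      rw [h1, ih, mul_neg_left, S.D_left, neg_neg, smul_smul, ← pow_succ]

lemma negD_pow_right : ∀ (j : ℕ) (v x : A) (μ : k),
    S.mul x (((-S.D) ^ j) v) μ
      = (((-S.D - μ • LinearMap.id) : A →ₗ[k] A) ^ j) (S.mul x v μ) := by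
  intro j
  induction j with
  | zero => intro v x μ; rw [pow_zero, pow_zero, Module.End.one_apply, Module.End.one_apply]
  | succ j ih =>
      intro v x μ
      have h1 : ((-S.D) ^ (j + 1)) v = ((-S.D) ^ j) (-(S.D v)) := by
        rw [pow_succ, Module.End.mul_apply, LinearMap.neg_apply]
      have h2 : ((-S.D - μ • LinearMap.id : A →ₗ[k] A) ^ (j + 1)) (S.mul x v μ)
          = ((-S.D - μ • LinearMap.id : A →ₗ[k] A) ^ j)
              ((-S.D - μ • LinearMap.id : A →ₗ[k] A) (S.mul x v μ)) := by
        rw [pow_succ, Module.End.mul_apply]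
      rw [h1, ih, h2]
      congr 1
      rw [mul_neg_right, S.D_right]
      rw [LinearMap.sub_apply, LinearMap.neg_apply, LinearMap.smul_apply, LinearMap.id_apply]
      abel

variable [CharZero k]

/-- `(a ∘_{-∂} b) ∘_μ y = a ∘_μ (b ∘_0 y)`. -/
lemma mul_evalNegD_left (a b y : A) (μ : k) :
    S.mul (evalNegD S.D (S.mul a b)) y μ = S.mul a (S.mul b y 0) μ := by
  have hspec := polyCoeffs_spec (S.poly a b)
  set c := polyCoeffs (S.mul a b) with hc
  rw [evalNegD_eq_TD S.D hspec, TD_apply]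
  rw [mul_finsupp_sum_left]
  have h2 : (c.sum fun j v => S.mul (((-S.D) ^ j) v) y μ)
      = c.sum fun j v => (μ ^ j) • S.mul v y μ :=
    Finsupp.sum_congr fun j _ => negD_pow_left S j (c j) y μ
  rw [h2]
  have h3 : S.mul (c.sum fun j v => (μ ^ j) • v) y μ
      = c.sum fun j v => (μ ^ j) • S.mul v y μ := by
    rw [mul_finsupp_sum_left]
    exact Finsupp.sum_congr fun j _ => S.smul_left _ _ _ _
  rw [← h3, ← hspec μ]
  have h4 := S.assoc a b y μ 0
  rwa [add_zero] at h4

/-- `a ∘_μ (x ∘_{-∂} b) = (a ∘_μ x) ∘_{-∂} b`. -/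
lemma mul_evalNegD_right (a x b : A) (μ : k) :
    S.mul a (evalNegD S.D (S.mul x b)) μ = evalNegD S.D (S.mul (S.mul a x μ) b) := by
  classical
  have hspec := polyCoeffs_spec (S.poly x b)
  set c := polyCoeffs (S.mul x b) with hc
  have hR : evalNegD S.D (S.mul (S.mul a x μ) b)
      = ∑ j ∈ c.support, (Polynomial.aeval (-S.D : A →ₗ[k] A))
          ((Polynomial.X - Polynomial.C μ) ^ j) (S.mul a (c j) μ) := by
    refine evalNegD_eq_sum S.D c.support (fun j => (Polynomial.X - Polynomial.C μ) ^ j)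
      (fun j => S.mul a (c j) μ) (fun ν => ?_)
    have h1 := S.assoc a x b μ (ν - μ)
    rw [show μ + (ν - μ) = ν by ring] at h1
    rw [h1, hspec (ν - μ), mul_finsupp_sum_right]
    rw [Finsupp.sum]
    refine Finset.sum_congr rfl fun j _ => ?_
    rw [Polynomial.eval_pow, Polynomial.eval_sub, Polynomial.eval_X, Polynomial.eval_C]
    rw [S.smul_right]
  rw [hR, evalNegD_eq_TD S.D hspec, TD_apply]
  have h2 : (c.sum fun j v => ((-S.D) ^ j) v)
      = ∑ j ∈ c.support, ((-S.D) ^ j) (c j) := rfl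
  rw [h2, mul_sum_right]
  refine Finset.sum_congr rfl fun j _ => ?_
  rw [negD_pow_right]
  rw [map_pow, map_sub, Polynomial.aeval_X, Polynomial.aeval_C,
    Module.algebraMap_end_eq_smul_id]

/-- `x ∘_{-∂} b = x ∘_0 b + ∂ w` for some `w`. -/
lemma evalNegD_mul_decomp (x b : A) :
    ∃ w : A, evalNegD S.D (S.mul x b) = S.mul x b 0 + S.D w := by
  classical
  have hspec := polyCoeffs_spec (S.poly x b)
  set c := polyCoeffs (S.mul x b) with hc
  refine ⟨c.sum fun j v => (if j = 0 then 0 else -(((-S.D) ^ (j - 1)) v)), ?_⟩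
  rw [evalNegD_eq_TD S.D hspec, TD_apply]
  rw [map_finsuppSum S.D c _]
  have h0 : S.mul x b 0 = c.sum fun j v => if j = 0 then v else 0 := by
    rw [hspec 0]
    refine Finsupp.sum_congr fun j _ => ?_
    cases j with
    | zero => rw [pow_zero, one_smul, if_pos rfl]
    | succ j => rw [zero_pow (Nat.succ_ne_zero j), zero_smul, if_neg (Nat.succ_ne_zero j)]
  rw [h0, ← Finsupp.sum_add]
  refine Finsupp.sum_congr fun j _ => ?_
  cases j with
  | zero => simp
  | succ j =>
      rw [if_neg (Nat.succ_ne_zero j), if_neg (Nat.succ_ne_zero j), Nat.add_sub_cancel,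
        map_neg, zero_add]
      rw [pow_succ', Module.End.mul_apply, LinearMap.neg_apply]

/-- `a ∘_{-∂} (∂ w) = 0`. -/
lemma evalNegD_mul_D (a w : A) :
    evalNegD S.D (fun lam => S.mul a (S.D w) lam) = 0 := by
  classical
  have hspec := polyCoeffs_spec (S.poly a w)
  set d := polyCoeffs (S.mul a w) with hd
  have hpres : ∀ lam : k, S.mul a (S.D w) lam
      = ∑ jb ∈ d.support ×ˢ (Finset.univ : Finset Bool),
          (Polynomial.X ^ (if jb.2 then jb.1 else jb.1 + 1)).eval lam •
            (if jb.2 then S.D (d jb.1) else d jb.1) := by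
    intro lam
    rw [S.D_right, Finset.sum_product]
    have hsm : lam • S.mul a w lam = ∑ j ∈ d.support, lam ^ (j + 1) • d j := by
      rw [hspec lam, Finsupp.sum, Finset.smul_sum]
      refine Finset.sum_congr rfl fun j _ => ?_
      rw [smul_smul, ← pow_succ']
    rw [hsm, hspec lam, map_finsuppSum S.D d _, Finsupp.sum]
    rw [← Finset.sum_add_distrib]
    refine Finset.sum_congr rfl fun j _ => ?_
    rw [Fintype.sum_bool]
    simp only [Polynomial.eval_pow, Polynomial.eval_X, if_true, Bool.false_eq_true, if_false]
    rw [map_smul S.D]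
  rw [evalNegD_eq_sum S.D _ _ _ hpres]
  rw [Finset.sum_product]
  refine Finset.sum_eq_zero fun j _ => ?_
  rw [Fintype.sum_bool]
  simp only [map_pow, Polynomial.aeval_X, if_true, Bool.false_eq_true, if_false]
  have h5 : ((-S.D) ^ (j + 1)) (d j) = ((-S.D) ^ j) (-(S.D (d j))) := by
    rw [pow_succ, Module.End.mul_apply, LinearMap.neg_apply]
  rw [h5, map_neg]
  abel

/-- `a ∘_{-∂} (x ∘_{-∂} b) = (a ∘_{-∂} x) ∘_{-∂} b`. -/
lemma evalNegD_assoc (a x b : A) :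
    evalNegD S.D (fun lam => S.mul a (evalNegD S.D (S.mul x b)) lam)
      = evalNegD S.D (fun lam => S.mul (evalNegD S.D (S.mul a x)) b lam) := by
  have hR : (fun lam => S.mul (evalNegD S.D (S.mul a x)) b lam)
      = fun lam => S.mul a (S.mul x b 0) lam :=
    funext fun lam => mul_evalNegD_left S a x b lam
  rw [hR]
  obtain ⟨w, hw⟩ := evalNegD_mul_decomp S x b
  have hL : (fun lam => S.mul a (evalNegD S.D (S.mul x b)) lam)
      = fun lam => S.mul a (S.mul x b 0) lam + S.mul a (S.D w) lam :=
    funext fun lam => by rw [hw, S.add_right]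
  rw [hL, evalNegD_add S.D (S.poly a (S.mul x b 0)) (S.poly a (S.D w)),
    evalNegD_mul_D, add_zero]

end Conf

/-! ### Combinatorial helpers -/

lemma sum_merge (lam : ℕ → k) : ∀ m i : ℕ, i < m →
    ∑ j ∈ Finset.range m,
        (if j < i then lam j else if j = i then lam i + lam (i + 1) else lam (j + 1))
      = ∑ j ∈ Finset.range (m + 1), lam j := by
  intro m
  induction m with
  | zero => intro i hi; exact absurd hi (Nat.not_lt_zero i)
  | succ m ih =>
      intro i hi
      rcases Nat.lt_succ_iff_lt_or_eq.mp hi with h | rfl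
      · rw [Finset.sum_range_succ, ih i h, Finset.sum_range_succ lam (m + 1)]
        have h1 : ¬ m < i := by omega
        have h2 : m ≠ i := by omega
        rw [if_neg h1, if_neg h2]
      · rw [Finset.sum_range_succ]
        rw [Finset.sum_congr rfl fun j hj => if_pos (Finset.mem_range.mp hj)]
        rw [if_neg (lt_irrefl i), if_pos rfl]
        rw [Finset.sum_range_succ lam (i + 1), Finset.sum_range_succ lam i]
        ring

lemma sum_shift_ge (lam : ℕ → k) (m i : ℕ) (h : m ≤ i) :
    ∑ j ∈ Finset.range m,
        (if j < i then lam j else if j = i then lam i + lam (i + 1) else lam (j + 1))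
      = ∑ j ∈ Finset.range m, lam j :=
  Finset.sum_congr rfl fun j hj => if_pos (lt_of_lt_of_le (Finset.mem_range.mp hj) h)

/-- Let `A` be an associative conformal algebra.  The Hochschild
differential is a graded derivation with respect to the cup product: for
`f ∈ C^m(A, A)` and `g ∈ C^n(A, A)`, `m, n ≥ 0`,
`d_{m+n}(f ⊔ g) = d_m(f) ⊔ g + (-1)^m f ⊔ d_n(g)`.  (Degree-`0` cochains are
represented by elements `b ∈ A`.) -/
theorem hochschild_diff_graded_derivation_cup {k A : Type*} [Field k] [CharZero k]
    [AddCommGroup A] [Module k A] (S : AssocConfAlg k A) :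
    -- m, n ≥ 1
    (∀ m n : ℕ, 1 ≤ m → 1 ≤ n → ∀ f g : CMap k A,
      IsU S.D (m - 1) f → IsU S.D (n - 1) g →
      hdiff S.mul (m + n) (cup S.mul m f g)
        = cup S.mul (m + 1) (hdiff S.mul m f) g
          + ((-1 : ℤ) ^ m) • cup S.mul m f (hdiff S.mul n g)) ∧
    -- m = 0
    (∀ n : ℕ, 1 ≤ n → ∀ (b : A) (g : CMap k A), IsU S.D (n - 1) g →
      hdiff S.mul n (cup0L S.mul b g)
        = cup S.mul 1 (hdiff0 S.D S.mul b) g + cup0L S.mul b (hdiff S.mul n g)) ∧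
    -- n = 0
    (∀ m : ℕ, 1 ≤ m → ∀ (f : CMap k A) (b : A), IsU S.D (m - 1) f →
      hdiff S.mul m (cup0R S.D S.mul f b)
        = cup0R S.D S.mul (hdiff S.mul m f) b
          + ((-1 : ℤ) ^ m) • cup S.mul m f (hdiff0 S.D S.mul b)) ∧
    -- m = n = 0
    (∀ b b' : A,
      hdiff0 S.D S.mul (cup00 S.D S.mul b b')
        = cup0R S.D S.mul (hdiff0 S.D S.mul b) b' + cup0L S.mul b (hdiff0 S.D S.mul b')) := by
  refine ⟨?_, ?_, ?_, ?_⟩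
  · -- m, n ≥ 1
    rintro m n hm hn f g hf hg
    obtain ⟨M, rfl⟩ : ∃ M, m = M + 1 := ⟨m - 1, by omega⟩
    obtain ⟨N, rfl⟩ : ∃ N, n = N + 1 := ⟨n - 1, by omega⟩
    simp only [Nat.add_sub_cancel] at hf hg
    funext lam a
    simp only [Pi.add_apply, Pi.smul_apply]
    -- expand the left-hand side
    rw [show hdiff S.mul (M + 1 + (N + 1)) (cup S.mul (M + 1) f g) lam a
        = S.mul (a 0)
            (S.mul (f (fun r => lam (r + 1)) (fun r => a (r + 1)))
              (g (fun r => lam (r + (M + 2))) (fun r => a (r + (M + 2))))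
              (∑ j ∈ Finset.range (M + 1), lam (j + 1)))
            (lam 0)
          + (∑ i ∈ Finset.range (M + 1 + (N + 1)), ((-1 : ℤ) ^ (i + 1)) •
              S.mul
                (f (fun r => if r < i then lam r else if r = i then lam i + lam (i + 1)
                      else lam (r + 1))
                   (fun r => if r < i then a r else if r = i then S.mul (a i) (a (i + 1)) (lam i)
                      else a (r + 1)))
                (g (fun r => if r + (M + 1) < i then lam (r + (M + 1))
                      else if r + (M + 1) = i then lam i + lam (i + 1) else lam (r + (M + 1) + 1))
                   (fun r => if r + (M + 1) < i then a (r + (M + 1))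
                      else if r + (M + 1) = i then S.mul (a i) (a (i + 1)) (lam i)
                      else a (r + (M + 1) + 1)))
                (∑ j ∈ Finset.range (M + 1),
                  if j < i then lam j else if j = i then lam i + lam (i + 1) else lam (j + 1)))
          + ((-1 : ℤ) ^ (M + 1 + (N + 1) + 1)) •
              S.mul
                (S.mul (f lam a)
                  (g (fun r => lam (r + (M + 1))) (fun r => a (r + (M + 1))))
                  (∑ j ∈ Finset.range (M + 1), lam j))
                (a (M + 1 + (N + 1)))
                (∑ j ∈ Finset.range (M + 1 + (N + 1)), lam j)
      from rfl]
    -- expand the first right-hand summand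
    rw [show cup S.mul (M + 1 + 1) (hdiff S.mul (M + 1) f) g lam a
        = S.mul
            (S.mul (a 0) (f (fun r => lam (r + 1)) (fun r => a (r + 1))) (lam 0)
              + (∑ i ∈ Finset.range (M + 1), ((-1 : ℤ) ^ (i + 1)) •
                  f (fun r => if r < i then lam r else if r = i then lam i + lam (i + 1)
                        else lam (r + 1))
                    (fun r => if r < i then a r
                        else if r = i then S.mul (a i) (a (i + 1)) (lam i) else a (r + 1)))
              + ((-1 : ℤ) ^ (M + 1 + 1)) •
                  S.mul (f lam a) (a (M + 1)) (∑ j ∈ Finset.range (M + 1), lam j))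
            (g (fun r => lam (r + (M + 2))) (fun r => a (r + (M + 2))))
            (∑ j ∈ Finset.range (M + 2), lam j)
      from rfl]
    -- expand the second right-hand summand
    rw [show cup S.mul (M + 1) f (hdiff S.mul (N + 1) g) lam a
        = S.mul (f lam a)
            (S.mul (a (0 + (M + 1)))
                (g (fun r => lam (r + 1 + (M + 1))) (fun r => a (r + 1 + (M + 1))))
                (lam (0 + (M + 1)))
              + (∑ i ∈ Finset.range (N + 1), ((-1 : ℤ) ^ (i + 1)) •
                  g (fun r => if r < i then lam (r + (M + 1))
                        else if r = i then lam (i + (M + 1)) + lam (i + 1 + (M + 1))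
                        else lam (r + 1 + (M + 1)))
                    (fun r => if r < i then a (r + (M + 1))
                        else if r = i then
                          S.mul (a (i + (M + 1))) (a (i + 1 + (M + 1))) (lam (i + (M + 1)))
                        else a (r + 1 + (M + 1))))
              + ((-1 : ℤ) ^ (N + 1 + 1)) •
                  S.mul (g (fun r => lam (r + (M + 1))) (fun r => a (r + (M + 1))))
                    (a (N + 1 + (M + 1)))
                    (∑ j ∈ Finset.range (N + 1), lam (j + (M + 1))))
            (∑ j ∈ Finset.range (M + 1), lam j)
      from rfl]
    -- split the long sum on the left
    rw [Finset.sum_range_add (fun i => ((-1 : ℤ) ^ (i + 1)) •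
          S.mul
            (f (fun r => if r < i then lam r else if r = i then lam i + lam (i + 1)
                  else lam (r + 1))
               (fun r => if r < i then a r else if r = i then S.mul (a i) (a (i + 1)) (lam i)
                  else a (r + 1)))
            (g (fun r => if r + (M + 1) < i then lam (r + (M + 1))
                  else if r + (M + 1) = i then lam i + lam (i + 1) else lam (r + (M + 1) + 1))
               (fun r => if r + (M + 1) < i then a (r + (M + 1))
                  else if r + (M + 1) = i then S.mul (a i) (a (i + 1)) (lam i)
                  else a (r + (M + 1) + 1)))
            (∑ j ∈ Finset.range (M + 1),
              if j < i then lam j else if j = i then lam i + lam (i + 1) else lam (j + 1)))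
        (M + 1) (N + 1)]
    -- rewrite the first part of the split sum
    have hSF : ∀ i ∈ Finset.range (M + 1),
        ((-1 : ℤ) ^ (i + 1)) •
          S.mul
            (f (fun r => if r < i then lam r else if r = i then lam i + lam (i + 1)
                  else lam (r + 1))
               (fun r => if r < i then a r else if r = i then S.mul (a i) (a (i + 1)) (lam i)
                  else a (r + 1)))
            (g (fun r => if r + (M + 1) < i then lam (r + (M + 1))
                  else if r + (M + 1) = i then lam i + lam (i + 1) else lam (r + (M + 1) + 1))
               (fun r => if r + (M + 1) < i then a (r + (M + 1))
                  else if r + (M + 1) = i then S.mul (a i) (a (i + 1)) (lam i)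
                  else a (r + (M + 1) + 1)))
            (∑ j ∈ Finset.range (M + 1),
              if j < i then lam j else if j = i then lam i + lam (i + 1) else lam (j + 1))
        = ((-1 : ℤ) ^ (i + 1)) •
          S.mul
            (f (fun r => if r < i then lam r else if r = i then lam i + lam (i + 1)
                  else lam (r + 1))
               (fun r => if r < i then a r else if r = i then S.mul (a i) (a (i + 1)) (lam i)
                  else a (r + 1)))
            (g (fun r => lam (r + (M + 2))) (fun r => a (r + (M + 2))))
            (∑ j ∈ Finset.range (M + 2), lam j) := by
      intro i hi
      have hi' := Finset.mem_range.mp hi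
      have e2 : (fun r => if r + (M + 1) < i then lam (r + (M + 1))
            else if r + (M + 1) = i then lam i + lam (i + 1) else lam (r + (M + 1) + 1))
          = fun r => lam (r + (M + 2)) := by
        funext r
        rw [if_neg (show ¬ (r + (M + 1) < i) by omega),
          if_neg (show ¬ (r + (M + 1) = i) by omega)]
        exact congrArg lam (by omega)
      have e3 : (fun r => if r + (M + 1) < i then a (r + (M + 1))
            else if r + (M + 1) = i then S.mul (a i) (a (i + 1)) (lam i)
            else a (r + (M + 1) + 1))
          = fun r => a (r + (M + 2)) := by
        funext r
        rw [if_neg (show ¬ (r + (M + 1) < i) by omega),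
          if_neg (show ¬ (r + (M + 1) = i) by omega)]
        exact congrArg a (by omega)
      rw [e2, e3, sum_merge lam (M + 1) i hi']
    rw [Finset.sum_congr rfl hSF]
    -- rewrite the second part of the split sum
    have hSG : ∀ i ∈ Finset.range (N + 1),
        ((-1 : ℤ) ^ (M + 1 + i + 1)) •
          S.mul
            (f (fun r => if r < M + 1 + i then lam r
                  else if r = M + 1 + i then lam (M + 1 + i) + lam (M + 1 + i + 1)
                  else lam (r + 1))
               (fun r => if r < M + 1 + i then a r
                  else if r = M + 1 + i then
                    S.mul (a (M + 1 + i)) (a (M + 1 + i + 1)) (lam (M + 1 + i))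
                  else a (r + 1)))
            (g (fun r => if r + (M + 1) < M + 1 + i then lam (r + (M + 1))
                  else if r + (M + 1) = M + 1 + i then lam (M + 1 + i) + lam (M + 1 + i + 1)
                  else lam (r + (M + 1) + 1))
               (fun r => if r + (M + 1) < M + 1 + i then a (r + (M + 1))
                  else if r + (M + 1) = M + 1 + i then
                    S.mul (a (M + 1 + i)) (a (M + 1 + i + 1)) (lam (M + 1 + i))
                  else a (r + (M + 1) + 1)))
            (∑ j ∈ Finset.range (M + 1),
              if j < M + 1 + i then lam j
              else if j = M + 1 + i then lam (M + 1 + i) + lam (M + 1 + i + 1) else lam (j + 1))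
        = ((-1 : ℤ) ^ (M + 1)) • (((-1 : ℤ) ^ (i + 1)) •
            S.mul (f lam a)
              (g (fun r => if r < i then lam (r + (M + 1))
                    else if r = i then lam (i + (M + 1)) + lam (i + 1 + (M + 1))
                    else lam (r + 1 + (M + 1)))
                 (fun r => if r < i then a (r + (M + 1))
                    else if r = i then
                      S.mul (a (i + (M + 1))) (a (i + 1 + (M + 1))) (lam (i + (M + 1)))
                    else a (r + 1 + (M + 1))))
              (∑ j ∈ Finset.range (M + 1), lam j)) := by
      intro i hi
      have hi' := Finset.mem_range.mp hi
      have ef : f (fun r => if r < M + 1 + i then lam r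
            else if r = M + 1 + i then lam (M + 1 + i) + lam (M + 1 + i + 1) else lam (r + 1))
          (fun r => if r < M + 1 + i then a r
            else if r = M + 1 + i then
              S.mul (a (M + 1 + i)) (a (M + 1 + i + 1)) (lam (M + 1 + i))
            else a (r + 1)) = f lam a :=
        hf.depends _ lam _ a (fun r hr => by rw [if_pos (by omega)])
          (fun r hr => by rw [if_pos (by omega)])
      have e4 : (fun r => if r + (M + 1) < M + 1 + i then lam (r + (M + 1))
            else if r + (M + 1) = M + 1 + i then lam (M + 1 + i) + lam (M + 1 + i + 1)
            else lam (r + (M + 1) + 1))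
          = fun r => if r < i then lam (r + (M + 1))
              else if r = i then lam (i + (M + 1)) + lam (i + 1 + (M + 1))
              else lam (r + 1 + (M + 1)) := by
        funext r
        rcases lt_trichotomy r i with h | h | h
        · rw [if_pos (show r + (M + 1) < M + 1 + i by omega), if_pos h]
        · subst h
          rw [if_neg (show ¬ (r + (M + 1) < M + 1 + r) by omega),
            if_pos (show r + (M + 1) = M + 1 + r by omega),
            if_neg (lt_irrefl r), if_pos rfl,
            show M + 1 + r + 1 = r + 1 + (M + 1) by omega,
            show M + 1 + r = r + (M + 1) by omega]
        · rw [if_neg (show ¬ (r + (M + 1) < M + 1 + i) by omega),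
            if_neg (show ¬ (r + (M + 1) = M + 1 + i) by omega),
            if_neg (show ¬ (r < i) by omega), if_neg (show ¬ (r = i) by omega)]
          exact congrArg lam (by omega)
      have e5 : (fun r => if r + (M + 1) < M + 1 + i then a (r + (M + 1))
            else if r + (M + 1) = M + 1 + i then
              S.mul (a (M + 1 + i)) (a (M + 1 + i + 1)) (lam (M + 1 + i))
            else a (r + (M + 1) + 1))
          = fun r => if r < i then a (r + (M + 1))
              else if r = i then
                S.mul (a (i + (M + 1))) (a (i + 1 + (M + 1))) (lam (i + (M + 1)))
              else a (r + 1 + (M + 1)) := by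
        funext r
        rcases lt_trichotomy r i with h | h | h
        · rw [if_pos (show r + (M + 1) < M + 1 + i by omega), if_pos h]
        · subst h
          rw [if_neg (show ¬ (r + (M + 1) < M + 1 + r) by omega),
            if_pos (show r + (M + 1) = M + 1 + r by omega),
            if_neg (lt_irrefl r), if_pos rfl,
            show M + 1 + r + 1 = r + 1 + (M + 1) by omega,
            show M + 1 + r = r + (M + 1) by omega]
        · rw [if_neg (show ¬ (r + (M + 1) < M + 1 + i) by omega),
            if_neg (show ¬ (r + (M + 1) = M + 1 + i) by omega),
            if_neg (show ¬ (r < i) by omega), if_neg (show ¬ (r = i) by omega)]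
          exact congrArg a (by omega)
      have esum : (∑ j ∈ Finset.range (M + 1),
            if j < M + 1 + i then lam j
            else if j = M + 1 + i then lam (M + 1 + i) + lam (M + 1 + i + 1) else lam (j + 1))
          = ∑ j ∈ Finset.range (M + 1), lam j :=
        sum_shift_ge lam (M + 1) (M + 1 + i) (by omega)
      rw [ef, e4, e5, esum, smul_smul, ← pow_add]
      rfl
    rw [Finset.sum_congr rfl hSG]
    -- rewrite the last term on the left
    have hlast : ((-1 : ℤ) ^ (M + 1 + (N + 1) + 1)) •
          S.mul
            (S.mul (f lam a) (g (fun r => lam (r + (M + 1))) (fun r => a (r + (M + 1))))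
              (∑ j ∈ Finset.range (M + 1), lam j))
            (a (M + 1 + (N + 1)))
            (∑ j ∈ Finset.range (M + 1 + (N + 1)), lam j)
        = ((-1 : ℤ) ^ (M + 1)) • (((-1 : ℤ) ^ (N + 1 + 1)) •
            S.mul (f lam a)
              (S.mul (g (fun r => lam (r + (M + 1))) (fun r => a (r + (M + 1))))
                (a (N + 1 + (M + 1)))
                (∑ j ∈ Finset.range (N + 1), lam (j + (M + 1))))
              (∑ j ∈ Finset.range (M + 1), lam j)) := by
      have hsum : (∑ j ∈ Finset.range (M + 1 + (N + 1)), lam j)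
          = (∑ j ∈ Finset.range (M + 1), lam j)
            + ∑ j ∈ Finset.range (N + 1), lam (j + (M + 1)) := by
        rw [Finset.sum_range_add]
        congr 1
        exact Finset.sum_congr rfl fun j _ => congrArg lam (by omega)
      have ha : a (M + 1 + (N + 1)) = a (N + 1 + (M + 1)) := congrArg a (by omega)
      rw [hsum, ha, S.assoc, smul_smul, ← pow_add]
      rfl
    rw [hlast]
    -- distribute the first right-hand summand
    rw [S.add_left, S.add_left, mul_sum_left S]
    simp only [mul_zsmul_left]
    have hc1 : S.mul
          (S.mul (a 0) (f (fun r => lam (r + 1)) (fun r => a (r + 1))) (lam 0))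
          (g (fun r => lam (r + (M + 2))) (fun r => a (r + (M + 2))))
          (∑ j ∈ Finset.range (M + 2), lam j)
        = S.mul (a 0)
            (S.mul (f (fun r => lam (r + 1)) (fun r => a (r + 1)))
              (g (fun r => lam (r + (M + 2))) (fun r => a (r + (M + 2))))
              (∑ j ∈ Finset.range (M + 1), lam (j + 1)))
            (lam 0) := by
      have h := S.assoc (a 0) (f (fun r => lam (r + 1)) (fun r => a (r + 1)))
        (g (fun r => lam (r + (M + 2))) (fun r => a (r + (M + 2))))
        (lam 0) (∑ j ∈ Finset.range (M + 1), lam (j + 1))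
      rw [show lam 0 + ∑ j ∈ Finset.range (M + 1), lam (j + 1)
          = ∑ j ∈ Finset.range (M + 2), lam j from by
        rw [add_comm]; exact (Finset.sum_range_succ' lam (M + 1)).symm] at h
      exact h
    rw [hc1]
    have hc3 : S.mul
          (S.mul (f lam a) (a (M + 1)) (∑ j ∈ Finset.range (M + 1), lam j))
          (g (fun r => lam (r + (M + 2))) (fun r => a (r + (M + 2))))
          (∑ j ∈ Finset.range (M + 2), lam j)
        = S.mul (f lam a)
            (S.mul (a (M + 1)) (g (fun r => lam (r + (M + 2))) (fun r => a (r + (M + 2))))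
              (lam (M + 1)))
            (∑ j ∈ Finset.range (M + 1), lam j) := by
      have h := S.assoc (f lam a) (a (M + 1))
        (g (fun r => lam (r + (M + 2))) (fun r => a (r + (M + 2))))
        (∑ j ∈ Finset.range (M + 1), lam j) (lam (M + 1))
      rw [show (∑ j ∈ Finset.range (M + 1), lam j) + lam (M + 1)
          = ∑ j ∈ Finset.range (M + 2), lam j from (Finset.sum_range_succ lam (M + 1)).symm] at h
      exact h
    rw [hc3]
    -- distribute the second right-hand summand
    rw [S.add_right, S.add_right, mul_sum_right S]
    simp only [mul_zsmul_right]
    rw [show (fun r => lam (r + 1 + (M + 1))) = (fun r => lam (r + (M + 2))) from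
      funext fun r => congrArg lam (by omega)]
    rw [show (fun r => a (r + 1 + (M + 1))) = (fun r => a (r + (M + 2))) from
      funext fun r => congrArg a (by omega)]
    simp only [Nat.zero_add]
    rw [smul_add, smul_add, Finset.smul_sum]
    rw [show ((-1 : ℤ)) ^ (M + 1 + 1) = -((-1 : ℤ)) ^ (M + 1) from by rw [pow_succ]; ring]
    simp only [neg_smul]
    abel
  · -- m = 0
    rintro n hn b g hg
    obtain ⟨N, rfl⟩ : ∃ N, n = N + 1 := ⟨n - 1, by omega⟩
    funext lam a
    simp only [hdiff, cup0L, cup, hdiff0, Pi.add_apply]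
    rw [show ∑ j ∈ Finset.range 1, lam j = lam 0 from by simp]
    rw [mul_sub_left S]
    rw [mul_evalNegD_left S (a 0) b _ (lam 0)]
    rw [S.add_right, S.add_right, mul_sum_right S]
    simp only [mul_zsmul_right]
    have hA1 : S.mul (S.mul b (a 0) 0) (g (fun r => lam (r + 1)) (fun r => a (r + 1))) (lam 0)
        = S.mul b (S.mul (a 0) (g (fun r => lam (r + 1)) (fun r => a (r + 1))) (lam 0)) 0 := by
      have h := S.assoc b (a 0) (g (fun r => lam (r + 1)) (fun r => a (r + 1))) 0 (lam 0)
      rwa [zero_add] at h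
    have hA2 : S.mul (S.mul b (g lam a) 0) (a (N + 1)) (∑ j ∈ Finset.range (N + 1), lam j)
        = S.mul b (S.mul (g lam a) (a (N + 1)) (∑ j ∈ Finset.range (N + 1), lam j)) 0 := by
      have h := S.assoc b (g lam a) (a (N + 1)) 0 (∑ j ∈ Finset.range (N + 1), lam j)
      rwa [zero_add] at h
    rw [hA1, hA2]
    abel
  · -- n = 0
    rintro m hm f b hf
    obtain ⟨M, rfl⟩ : ∃ M, m = M + 1 := ⟨m - 1, by omega⟩
    funext lam a
    simp only [hdiff, cup0R, cup, hdiff0, Pi.add_apply, Pi.smul_apply, zero_add]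
    simp only [S.add_left, mul_sum_left, mul_zsmul_left]
    rw [evalNegD_add S.D
      ((S.poly _ b).addF (IsPolyFun.sumF _ _ fun i _ => (S.poly _ b).zsmulF _))
      ((S.poly _ b).zsmulF _)]
    rw [evalNegD_add S.D (S.poly _ b) (IsPolyFun.sumF _ _ fun i _ => (S.poly _ b).zsmulF _)]
    rw [evalNegD_sum S.D _ _ fun i _ => (S.poly _ b).zsmulF _]
    simp only [evalNegD_zsmul S.D _ (S.poly _ b)]
    rw [← mul_evalNegD_right S (a 0)
      (f (fun r => lam (r + 1)) (fun r => a (r + 1))) b (lam 0)]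
    rw [← mul_evalNegD_right S (f lam a) (a (M + 1)) b (∑ j ∈ Finset.range (M + 1), lam j)]
    rw [mul_sub_right S]
    rw [mul_evalNegD_left S (f lam a) b (a (M + 1)) (∑ j ∈ Finset.range (M + 1), lam j)]
    rw [show ((-1 : ℤ)) ^ (M + 1 + 1) = -((-1 : ℤ)) ^ (M + 1) from by rw [pow_succ]; ring]
    rw [smul_sub]
    simp only [neg_smul]
    abel
  · -- m = n = 0
    intro b b'
    funext lam a
    simp only [hdiff0, cup00, cup0R, cup0L, Pi.add_apply]
    have e1 : (fun x => S.mul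
          (evalNegD S.D (fun y => S.mul (a 0) b y) - S.mul b (a 0) 0) b' x)
        = fun x => S.mul (evalNegD S.D (S.mul (a 0) b)) b' x
            - S.mul (S.mul b (a 0) 0) b' x :=
      funext fun x => mul_sub_left S _ _ _ _
    rw [e1, evalNegD_sub S.D (S.poly _ b') (S.poly _ b')]
    rw [mul_sub_right S b _ _ 0]
    rw [← mul_evalNegD_right S b (a 0) b' 0]
    rw [mul_evalNegD_left S b b' (a 0) 0]
    rw [evalNegD_assoc S (a 0) b b']
    abel
end
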